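/- arXiv:1307.6052 — 4 statements merged into one kernel-verified Lean document; each statement's English description precedes it below -/
import Mathlib

section
/- For a non-degenerate arrow environment a, the hitting time t_{-1} of -1 by the k-minimum walk is finite if and only if the deterministic process z (defined from a via: z_0 = k, and z_{n+1} is the number of 1's in the sequence a(n,1), a(n,2), … occurring before the (z_n - (k-1))-th 0 if z_n ≥ k, and zero otherwise) satisfies z_n = 0 for some n. -/
open MeasureTheory Filter

noncomputable section

attribute [local instance 10] Classical.propDecidable

/-- An arrow environment: for each site `x : ℤ` a sequence of arrows (values `±1`). -/
abbrev Env := ℤ → ℕ → ℤ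

/-- A cookie environment. -/
abbrev CEnv := ℤ → ℕ → ℝ

/-- All arrows are `±1`. -/
def IsArrow (a : Env) : Prop := ∀ x n, a x n = 1 ∨ a x n = -1

/-- Non-degeneracy: in every column there are infinitely many sign changes. -/
def NonDeg (a : Env) : Prop := ∀ x : ℤ, ∀ N : ℕ, ∃ n, N ≤ n ∧ a x n ≠ a x (n + 1)

/-- State of the single walk on an arrow environment started at `x0`:
position together with the local time function (number of visits so far). -/
def walkState (a : Env) (x0 : ℤ) : ℕ → ℤ × (ℤ → ℕ)
  | 0 => (x0, fun _ => 0)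
  | t + 1 =>
    let s := walkState a x0 t
    let L' := Function.update s.2 s.1 (s.2 s.1 + 1)
    (s.1 + a s.1 (L' s.1), L')

/-- Position of the walk on `a` started at `x0` at time `t`. -/
def walkX (a : Env) (x0 : ℤ) (t : ℕ) : ℤ := (walkState a x0 t).1

/-- Asymptotic local time of the walk on `a` started at `x0`, at site `x`. -/
def walkLocal (a : Env) (x0 x : ℤ) : ℕ∞ := ⨆ t, ((walkState a x0 t).2 x : ℕ∞)

/-- `a` is transient: the asymptotic local time of the walk started at `0` is finite everywhere. -/
def Transient (a : Env) : Prop := ∀ x : ℤ, walkLocal a 0 x < ⊤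

/-- The leftover environment after the walk started at `0`. -/
def leftoverEnv (a : Env) : Env := fun x n => a x (n + (walkLocal a 0 x).toNat)

/-- Iterated leftover environments. -/
def iterLO (a : Env) : ℕ → Env
  | 0 => a
  | j + 1 => leftoverEnv (iterLO a j)

/-- `a` is `k`-transient. -/
def KTransient (a : Env) (k : ℕ) : Prop := ∀ j < k, Transient (iterLO a j)

/-- `a` is `k`-right transient: each of the `k` sequential walkers tends to `+∞`. -/
def KRightTransient (a : Env) (k : ℕ) : Prop :=
  ∀ j < k, Tendsto (walkX (iterLO a j) 0) atTop atTop

/-- The sequential local time `L^{(k-seq)}`. -/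
def seqLocal (a : Env) (k : ℕ) (x : ℤ) : ℕ :=
  ∑ j ∈ Finset.range k, (walkLocal (iterLO a j) 0 x).toNat

/-- State of the `S`-mob walk of `k` particles with initial positions `init`. -/
def mobState (a : Env) {k : ℕ} (S : ℕ → Fin k) (init : Fin k → ℤ) :
    ℕ → (Fin k → ℤ) × (ℤ → ℕ)
  | 0 => (init, fun _ => 0)
  | t + 1 =>
    let s := mobState a S init t
    let pos := s.1 (S t)
    let L' := Function.update s.2 pos (s.2 pos + 1)
    (Function.update s.1 (S t) (pos + a pos (L' pos)), L')

/-- Asymptotic local time of the `S`-mob walk. -/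
def mobLocal (a : Env) {k : ℕ} (S : ℕ → Fin k) (init : Fin k → ℤ) (x : ℤ) : ℕ∞ :=
  ⨆ t, ((mobState a S init t).2 x : ℕ∞)

/-- A `k`-scheduling is proper if every particle is chosen infinitely often. -/
def ProperSched {k : ℕ} (S : ℕ → Fin k) : Prop := ∀ j : Fin k, ∀ N : ℕ, ∃ t, N ≤ t ∧ S t = j

/-- Smallest index attaining the minimum of `X`. -/
def minIdx {k : ℕ} (hk : k ≠ 0) (X : Fin k → ℤ) : Fin k :=
  (Finset.univ.filter fun j => ∀ i, X j ≤ X i).min' (by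
    obtain ⟨j, -, hj⟩ := Finset.exists_min_image Finset.univ X
      ⟨⟨0, Nat.pos_of_ne_zero hk⟩, Finset.mem_univ _⟩
    exact ⟨j, Finset.mem_filter.mpr ⟨Finset.mem_univ _, fun i => hj i (Finset.mem_univ _)⟩⟩)

/-- State of the `k`-min mob walk: at every step the leftmost particle
(ties broken by particle index) moves. -/
def minMobState (a : Env) {k : ℕ} (hk : k ≠ 0) (init : Fin k → ℤ) :
    ℕ → (Fin k → ℤ) × (ℤ → ℕ)
  | 0 => (init, fun _ => 0)
  | t + 1 =>
    let s := minMobState a hk init t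
    let j := minIdx hk s.1
    let pos := s.1 j
    let L' := Function.update s.2 pos (s.2 pos + 1)
    (Function.update s.1 j (pos + a pos (L' pos)), L')

/-- The `k`-minimum walk: position of the leftmost particle of the `k`-min mob walk. -/
def minWalkPos (a : Env) {k : ℕ} (hk : k ≠ 0) (init : Fin k → ℤ) (t : ℕ) : ℤ :=
  (minMobState a hk init t).1 (minIdx hk (minMobState a hk init t).1)

/-- The position reached by the particle moved at step `t` of the `k`-min mob walk. -/
def minMoveTo (a : Env) {k : ℕ} (hk : k ≠ 0) (init : Fin k → ℤ) (t : ℕ) : ℤ :=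
  (minMobState a hk init (t + 1)).1 (minIdx hk (minMobState a hk init t).1)

/-- Asymptotic local time of the `k`-min mob walk. -/
def minMobLocal (a : Env) {k : ℕ} (hk : k ≠ 0) (init : Fin k → ℤ) (x : ℤ) : ℕ∞ :=
  ⨆ t, ((minMobState a hk init t).2 x : ℕ∞)

/-- `t` is earlier than the hitting time `t₋₁` of `-1` by the `k`-minimum walk started at `0`. -/
def beforeHit (a : Env) {k : ℕ} (hk : k ≠ 0) (t : ℕ) : Prop :=
  ∀ s ≤ t, minWalkPos a hk (fun _ => 0) s ≠ -1

/-- The quantity `w_n` (an extended natural number): `w_0 = k`, and for `n ≠ 0`,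
`w_n = #{t < t₋₁ : X_t = n-1, X moved to ≠ n-2}` for the `k`-min mob walk started at `0`. -/
def wfun (a : Env) {k : ℕ} (hk : k ≠ 0) (n : ℤ) : ℕ∞ :=
  if n = 0 then (k : ℕ∞) else
    ⨆ T, (((Finset.range T).filter fun t => beforeHit a hk t ∧
      minWalkPos a hk (fun _ => 0) t = n - 1 ∧
      minMoveTo a hk (fun _ => 0) t ≠ n - 2).card : ℕ∞)

/-- Number of left crossings of the edge `(n, n-1)` by the `k`-min mob walk (started at `0`)
among the first `T` steps. -/
def leftCrossUpTo (a : Env) {k : ℕ} (hk : k ≠ 0) (n : ℤ) (T : ℕ) : ℕ :=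
  ((Finset.range T).filter fun t => minWalkPos a hk (fun _ => 0) t = n ∧
    minMoveTo a hk (fun _ => 0) t = n - 1).card

/-- Total number of left crossings of the edge `(n, n-1)` by the `k`-min mob walk. -/
def leftCrossTotal (a : Env) {k : ℕ} (hk : k ≠ 0) (n : ℤ) : ℕ∞ :=
  ⨆ T, (leftCrossUpTo a hk n T : ℕ∞)

/-- Number of left arrows (i.e. values `≠ 1`) among `c 1, …, c t`. -/
def leftsUpTo (c : ℕ → ℤ) (t : ℕ) : ℕ := ((Finset.Icc 1 t).filter fun i => c i ≠ 1).card

/-- Number of right arrows (i.e. values `= 1`) among `c 1, …, c t`. -/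
def rightsUpTo (c : ℕ → ℤ) (t : ℕ) : ℕ := ((Finset.Icc 1 t).filter fun i => c i = 1).card

/-- The number of right arrows occurring in `c 1, c 2, …` before the `j`-th left arrow. -/
def rightsBeforeLefts (j : ℕ) (c : ℕ → ℤ) : ℕ := sInf {t | j ≤ leftsUpTo c t} - j

/-- The number of left arrows occurring in `c 1, c 2, …` before the `j`-th right arrow. -/
def leftsBeforeRights (j : ℕ) (c : ℕ → ℤ) : ℕ := sInf {t | j ≤ rightsUpTo c t} - j

/-- The backward process `z` associated to an arrow environment and `k` particles:
`z 0 = k` and `z (n+1)` is the number of right arrows in column `n` occurring before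
`z n - (k-1)` left arrows when `z n ≥ k`, and `0` otherwise. -/
def zProc (a : Env) (k : ℕ) : ℕ → ℕ
  | 0 => k
  | n + 1 =>
    if k ≤ zProc a k n then
      rightsBeforeLefts (zProc a k n - (k - 1)) (fun i => a (n : ℤ) i)
    else 0

/-- `a` is `k`-right transient with respect to the initial positions `init`:
all particles of the `k`-min mob walk tend to `+∞`. -/
def KRightTransientFrom (a : Env) {k : ℕ} (hk : k ≠ 0) (init : Fin k → ℤ) : Prop :=
  ∀ j : Fin k, Tendsto (fun t => (minMobState a hk init t).1 j) atTop atTop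

/-- `a` is strongly `k`-right transient. -/
def StronglyKRightTransient (a : Env) {k : ℕ} (hk : k ≠ 0) : Prop :=
  ∀ init : Fin k → ℤ, KRightTransientFrom a hk init

/-- The leftover environment of the `k`-mob walk with initial positions `init`. -/
def mobLO (a : Env) {k : ℕ} (hk : k ≠ 0) (init : Fin k → ℤ) : Env :=
  fun x n => a x (n + (minMobLocal a hk init x).toNat)

/-- Shift on arrow environments. -/
def envShift : Env → Env := fun a x n => a (x + 1) n

/-- Shift on cookie environments. -/
def cookieShift : CEnv → CEnv := fun ω x n => ω (x + 1) n

/-- Restriction of an arrow environment to the nonnegative sites. -/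
def restNonneg : Env → (ℕ → ℕ → ℤ) := fun a n i => a (n : ℤ) i

/-- Shift on one-sided environments. -/
def seqShift : (ℕ → ℕ → ℤ) → (ℕ → ℕ → ℤ) := fun b n i => b (n + 1) i

/-- The success probabilities for a bounded cookie stack `p` with `M` cookies per site
(fair coins afterwards). -/
def qOf (M : ℕ) (p : ℕ → ℝ) (i : ℕ) : ℝ := if 1 ≤ i ∧ i ≤ M then p i else 1 / 2

/-- The expected total drift per site `δ`. -/
def driftSum (M : ℕ) (p : ℕ → ℝ) : ℝ := ∑ i ∈ Finset.Icc 1 M, (2 * p i - 1)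

/-- `μ` is the annealed measure on arrow environments corresponding to i.i.d. cookie stacks
whose `i`-th cookie has strength `q i`: all arrows are independent and `a x i = 1` with
probability `q i`. -/
def IsAnnealedIID (μ : Measure Env) (q : ℕ → ℝ) : Prop :=
  ∀ (F : Finset (ℤ × ℕ)) (f : ℤ × ℕ → ℤ), (∀ pr ∈ F, f pr = 1 ∨ f pr = -1) →
    μ {a : Env | ∀ pr ∈ F, a pr.1 pr.2 = f pr} =
      ENNReal.ofReal (∏ pr ∈ F, if f pr = 1 then q pr.2 else 1 - q pr.2)

/-- `μc` is the law of a single column of arrows with independent entries, `= 1` with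
probability `q i`. -/
def IsIIDCol (μc : Measure (ℕ → ℤ)) (q : ℕ → ℝ) : Prop :=
  ∀ (F : Finset ℕ) (f : ℕ → ℤ), (∀ i ∈ F, f i = 1 ∨ f i = -1) →
    μc {c : ℕ → ℤ | ∀ i ∈ F, c i = f i} =
      ENNReal.ofReal (∏ i ∈ F, if f i = 1 then q i else 1 - q i)

/-- `μ` is the annealed measure on arrow environments induced by the cookie measure `P`:
given `ω`, the arrows are independent with `ℙ(a x i = 1) = ω x i`. -/
def IsAnnealedOf (P : Measure CEnv) (μ : Measure Env) : Prop :=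
  ∀ (F : Finset (ℤ × ℕ)) (f : ℤ × ℕ → ℤ), (∀ pr ∈ F, f pr = 1 ∨ f pr = -1) →
    μ {a : Env | ∀ pr ∈ F, a pr.1 pr.2 = f pr} =
      ∫⁻ ω, ∏ pr ∈ F,
        ENNReal.ofReal (if f pr = 1 then ω pr.1 pr.2 else 1 - ω pr.1 pr.2) ∂P

/-- Hitting time of site `x` by the walk started at `0` (junk value if never hit). -/
def hitTime (a : Env) (x : ℤ) : ℕ := sInf {t | walkX a 0 t = x}

namespace S7

variable (a : Env) {k : ℕ} (hk : k ≠ 0)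

def st (t : ℕ) : (Fin k → ℤ) × (ℤ → ℕ) := minMobState a hk (fun _ => 0) t

def xp (t : ℕ) : ℤ := minWalkPos a hk (fun _ => 0) t

def mv (t : ℕ) : ℤ := minMoveTo a hk (fun _ => 0) t

def uC (x : ℤ) (T : ℕ) : ℕ :=
  ((Finset.range T).filter fun t => xp a hk t = x ∧ mv a hk t = x + 1).card

def dC (x : ℤ) (T : ℕ) : ℕ :=
  ((Finset.range T).filter fun t => xp a hk t = x + 1 ∧ mv a hk t = x).card

def nC (x : ℤ) (T : ℕ) : ℕ := (Finset.univ.filter fun j : Fin k => (st a hk T).1 j = x).card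

lemma minIdx_min (X : Fin k → ℤ) (i : Fin k) : X (minIdx hk X) ≤ X i := by
  have h : minIdx hk X ∈ Finset.univ.filter fun j => ∀ i, X j ≤ X i := Finset.min'_mem _ _
  exact (Finset.mem_filter.mp h).2 i

lemma xp_def (t : ℕ) : xp a hk t = (st a hk t).1 (minIdx hk (st a hk t).1) := rfl

lemma mv_def (t : ℕ) : mv a hk t = (st a hk (t+1)).1 (minIdx hk (st a hk t).1) := rfl

lemma st_succ (t : ℕ) : st a hk (t+1) =
    (Function.update (st a hk t).1 (minIdx hk (st a hk t).1)
      ((st a hk t).1 (minIdx hk (st a hk t).1) +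
        a ((st a hk t).1 (minIdx hk (st a hk t).1))
          ((st a hk t).2 ((st a hk t).1 (minIdx hk (st a hk t).1)) + 1)),
     Function.update (st a hk t).2 ((st a hk t).1 (minIdx hk (st a hk t).1))
      ((st a hk t).2 ((st a hk t).1 (minIdx hk (st a hk t).1)) + 1)) := by
  show minMobState a hk (fun _ => 0) (t+1) = _
  rw [minMobState]
  simp only [st, Function.update_self]

lemma mv_eq (t : ℕ) :
    mv a hk t = xp a hk t + a (xp a hk t) ((st a hk t).2 (xp a hk t) + 1) := by
  rw [mv_def, st_succ]
  simp [xp_def, Function.update_self]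

lemma st1_succ (t : ℕ) : (st a hk (t+1)).1 =
    Function.update (st a hk t).1 (minIdx hk (st a hk t).1) (mv a hk t) := by
  rw [mv_eq, st_succ]
  simp [xp_def]

lemma st2_succ (t : ℕ) : (st a hk (t+1)).2 =
    Function.update (st a hk t).2 (xp a hk t) ((st a hk t).2 (xp a hk t) + 1) := by
  rw [st_succ]; rfl

lemma mv_cases (hA : IsArrow a) (t : ℕ) :
    mv a hk t = xp a hk t + 1 ∨ mv a hk t = xp a hk t - 1 := by
  rcases hA (xp a hk t) ((st a hk t).2 (xp a hk t) + 1) with h | h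
  · left; rw [mv_eq, h]
  · right; rw [mv_eq, h]; ring

lemma xp_le (t : ℕ) (i : Fin k) : xp a hk t ≤ (st a hk t).1 i := minIdx_min hk _ i

lemma xp_succ_le_mv (t : ℕ) : xp a hk (t+1) ≤ mv a hk t := by
  have h := xp_le a hk (t+1) (minIdx hk (st a hk t).1)
  rwa [← mv_def] at h

lemma st1_succ_ge (hA : IsArrow a) (t : ℕ) (i : Fin k) :
    xp a hk t - 1 ≤ (st a hk (t+1)).1 i := by
  rw [st1_succ]
  rcases eq_or_ne i (minIdx hk (st a hk t).1) with rfl | h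
  · rw [Function.update_self]
    rcases mv_cases a hk hA t with h | h <;> omega
  · rw [Function.update_of_ne h]
    have := xp_le a hk t i; omega

lemma xp_succ_ge (hA : IsArrow a) (t : ℕ) : xp a hk t - 1 ≤ xp a hk (t+1) := by
  rw [xp_def]; exact st1_succ_ge a hk hA t _

lemma mv_of_lt (t : ℕ) (h : xp a hk (t+1) < xp a hk t) : mv a hk t = xp a hk (t+1) := by
  set i := minIdx hk (st a hk (t+1)).1 with hi
  have hx : xp a hk (t+1) = (st a hk (t+1)).1 i := rfl
  rw [st1_succ] at hx
  rcases eq_or_ne i (minIdx hk (st a hk t).1) with he | he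
  · rw [he, Function.update_self] at hx
    omega
  · exfalso
    rw [Function.update_of_ne he] at hx
    have h3 := xp_le a hk t i
    omega

lemma xp_zero : xp a hk 0 = 0 := rfl

lemma xp_le_self (hA : IsArrow a) (t : ℕ) : xp a hk t ≤ t := by
  induction t with
  | zero => exact le_of_eq (xp_zero a hk)
  | succ t ih =>
    have h1 := xp_succ_le_mv a hk t
    rcases mv_cases a hk hA t with h | h <;> push_cast <;> omega

lemma lt_card (x : ℤ) (T : ℕ) :
    (st a hk T).2 x = ((Finset.range T).filter fun t => xp a hk t = x).card := by
  induction T with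
  | zero => simp [st, minMobState]
  | succ T ih =>
    rw [Finset.range_add_one, Finset.filter_insert, st2_succ]
    by_cases h : xp a hk T = x
    · rw [if_pos h, Finset.card_insert_of_notMem (by simp), ← ih, ← h,
        Function.update_self]
    · rw [if_neg h, Function.update_of_ne (by exact fun hc => h hc.symm), ih]

lemma uC_mono (x : ℤ) {T T' : ℕ} (h : T ≤ T') : uC a hk x T ≤ uC a hk x T' :=
  Finset.card_le_card (Finset.filter_subset_filter _ (Finset.range_subset_range.mpr h))

lemma dC_mono (x : ℤ) {T T' : ℕ} (h : T ≤ T') : dC a hk x T ≤ dC a hk x T' :=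
  Finset.card_le_card (Finset.filter_subset_filter _ (Finset.range_subset_range.mpr h))

lemma uC_succ (x : ℤ) (T : ℕ) : uC a hk x (T+1) =
    uC a hk x T + (if xp a hk T = x ∧ mv a hk T = x + 1 then 1 else 0) := by
  rw [uC, Finset.range_add_one, Finset.filter_insert]
  split_ifs with h
  · rw [Finset.card_insert_of_notMem (by simp), uC]
  · rfl

lemma dC_succ (x : ℤ) (T : ℕ) : dC a hk x (T+1) =
    dC a hk x T + (if xp a hk T = x + 1 ∧ mv a hk T = x then 1 else 0) := by
  rw [dC, Finset.range_add_one, Finset.filter_insert]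
  split_ifs with h
  · rw [Finset.card_insert_of_notMem (by simp), dC]
  · rfl

lemma Icc_one_succ (t : ℕ) : Finset.Icc 1 (t+1) = insert (t+1) (Finset.Icc 1 t) := by
  ext s; simp only [Finset.mem_Icc, Finset.mem_insert]; omega

lemma rightsUpTo_succ (c : ℕ → ℤ) (t : ℕ) :
    rightsUpTo c (t+1) = rightsUpTo c t + (if c (t+1) = 1 then 1 else 0) := by
  rw [rightsUpTo, Icc_one_succ, Finset.filter_insert]
  split_ifs with h
  · rw [Finset.card_insert_of_notMem (by simp), rightsUpTo]
  · rfl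

lemma leftsUpTo_succ (c : ℕ → ℤ) (t : ℕ) :
    leftsUpTo c (t+1) = leftsUpTo c t + (if c (t+1) = 1 then 0 else 1) := by
  rw [leftsUpTo, Icc_one_succ, Finset.filter_insert]
  by_cases h : c (t+1) = 1
  · rw [if_neg (by simp [h]), if_pos h]; rfl
  · rw [if_pos h, Finset.card_insert_of_notMem (by simp), if_neg h]; rfl

lemma rights_add_lefts (c : ℕ → ℤ) (t : ℕ) : rightsUpTo c t + leftsUpTo c t = t := by
  induction t with
  | zero => simp [rightsUpTo, leftsUpTo]
  | succ t ih => rw [rightsUpTo_succ, leftsUpTo_succ]; split_ifs <;> omega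

lemma leftsUpTo_mono (c : ℕ → ℤ) {s s' : ℕ} (h : s ≤ s') : leftsUpTo c s ≤ leftsUpTo c s' :=
  Finset.card_le_card (Finset.filter_subset_filter _ (Finset.Icc_subset_Icc_right h))

lemma rightsUpTo_mono (c : ℕ → ℤ) {s s' : ℕ} (h : s ≤ s') : rightsUpTo c s ≤ rightsUpTo c s' :=
  Finset.card_le_card (Finset.filter_subset_filter _ (Finset.Icc_subset_Icc_right h))
lemma reads (hA : IsArrow a) (x : ℤ) (T : ℕ) :
    rightsUpTo (a x) ((st a hk T).2 x) = uC a hk x T ∧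
    leftsUpTo (a x) ((st a hk T).2 x) = dC a hk (x-1) T := by
  induction T with
  | zero =>
    constructor <;> simp [st, minMobState, rightsUpTo, leftsUpTo, uC, dC]
  | succ T ih =>
    obtain ⟨ihr, ihl⟩ := ih
    have hu := uC_succ a hk x T
    have hd := dC_succ a hk (x-1) T
    have hx1 : x - 1 + 1 = x := by ring
    rw [hx1] at hd
    by_cases h : xp a hk T = x
    · have hL : (st a hk (T+1)).2 x = (st a hk T).2 x + 1 := by
        rw [st2_succ, ← h, Function.update_self]
      have harr := mv_eq a hk T
      rw [h] at harr
      rcases hA x ((st a hk T).2 x + 1) with ha | ha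
      · have hmv : mv a hk T = x + 1 := by rw [harr, ha]
        have hmv' : mv a hk T ≠ x - 1 := by omega
        constructor
        · rw [hL, rightsUpTo_succ, ha, if_pos rfl, ihr, hu, if_pos ⟨h, hmv⟩]
        · rw [hL, leftsUpTo_succ, ha, if_pos rfl, ihl, hd,
            if_neg (by exact fun hc => hmv' hc.2)]
      · have hmv : mv a hk T = x - 1 := by rw [harr, ha]; ring
        have hmv' : mv a hk T ≠ x + 1 := by omega
        have ha1 : a x ((st a hk T).2 x + 1) ≠ 1 := by rw [ha]; decide
        constructor
        · rw [hL, rightsUpTo_succ, if_neg ha1, ihr, hu,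
            if_neg (by exact fun hc => hmv' hc.2)]
        · rw [hL, leftsUpTo_succ, if_neg ha1, ihl, hd, if_pos ⟨h, hmv⟩]
    · have hL : (st a hk (T+1)).2 x = (st a hk T).2 x := by
        rw [st2_succ, Function.update_of_ne (by exact fun hc => h hc.symm)]
      constructor
      · rw [hL, ihr, hu, if_neg (by exact fun hc => h hc.1), Nat.add_zero]
      · rw [hL, ihl, hd, if_neg (by exact fun hc => h hc.1), Nat.add_zero]

lemma L_split (hA : IsArrow a) (x : ℤ) (T : ℕ) :
    (st a hk T).2 x = uC a hk x T + dC a hk (x-1) T := by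
  obtain ⟨hr, hl⟩ := reads a hk hA x T
  have := rights_add_lefts (a x) ((st a hk T).2 x)
  omega

lemma nC_le (x : ℤ) (T : ℕ) : nC a hk x T ≤ k := by
  calc nC a hk x T ≤ Finset.univ.card := Finset.card_filter_le _ _
  _ = k := by simp

lemma nC_zero (x : ℤ) : nC a hk x 0 = if x = 0 then k else 0 := by
  by_cases h : x = 0 <;>
    simp [nC, st, minMobState, h, eq_comm, Finset.filter_const]

lemma nC_step (x : ℤ) (T : ℕ) :
    nC a hk x (T+1) + (if xp a hk T = x then 1 else 0)
      = nC a hk x T + (if mv a hk T = x then 1 else 0) := by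
  classical
  have hup : (fun j : Fin k => if (st a hk (T+1)).1 j = x then 1 else 0)
      = Function.update (fun j : Fin k => if (st a hk T).1 j = x then 1 else 0)
          (minIdx hk (st a hk T).1) (if mv a hk T = x then 1 else 0) := by
    funext j
    rcases eq_or_ne j (minIdx hk (st a hk T).1) with rfl | hj
    · rw [Function.update_self, st1_succ, Function.update_self]
    · rw [Function.update_of_ne hj, st1_succ, Function.update_of_ne hj]
  have h1 : nC a hk x (T+1) = ∑ j : Fin k, if (st a hk (T+1)).1 j = x then 1 else 0 :=
    Finset.card_filter _ _
  have h2 : nC a hk x T = ∑ j : Fin k, if (st a hk T).1 j = x then 1 else 0 :=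
    Finset.card_filter _ _
  rw [h1, hup, Finset.sum_update_of_mem (Finset.mem_univ _), h2,
    ← Finset.add_sum_erase _ _ (Finset.mem_univ (minIdx hk (st a hk T).1))]
  have hxd : xp a hk T = (st a hk T).1 (minIdx hk (st a hk T).1) := rfl
  rw [hxd, Finset.sdiff_singleton_eq_erase]
  omega

lemma balance (hA : IsArrow a) (x : ℤ) (T : ℕ) :
    nC a hk x T + (st a hk T).2 x
      = (if x = 0 then k else 0) + uC a hk (x-1) T + dC a hk x T := by
  induction T with
  | zero => simp [nC_zero, st, minMobState, uC, dC]
  | succ T ih =>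
    have hn := nC_step a hk x T
    have hL : (st a hk (T+1)).2 x = (st a hk T).2 x + (if xp a hk T = x then 1 else 0) := by
      by_cases h : xp a hk T = x
      · rw [st2_succ, ← h, Function.update_self, if_pos rfl]
      · rw [st2_succ, Function.update_of_ne (by exact fun hc => h hc.symm), if_neg h,
          Nat.add_zero]
    have hu := uC_succ a hk (x-1) T
    have hx1 : x - 1 + 1 = x := by ring
    rw [hx1] at hu
    have hd := dC_succ a hk x T
    have hsplit : (if mv a hk T = x then 1 else 0)
        = (if xp a hk T = x - 1 ∧ mv a hk T = x then 1 else 0)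
          + (if xp a hk T = x + 1 ∧ mv a hk T = x then (1:ℕ) else 0) := by
      rcases mv_cases a hk hA T with h | h <;> split_ifs with h1 h2 h3 <;> omega
    rw [hL, hu, hd]
    omega

def pC (n : ℕ) (T : ℕ) : ℕ := ∑ m ∈ Finset.range (n+1), nC a hk (m : ℤ) T

lemma sum_balance (hA : IsArrow a) (n : ℕ) (T : ℕ) :
    pC a hk n T + uC a hk (n : ℤ) T + dC a hk (-1) T
      = k + uC a hk (-1) T + dC a hk (n : ℤ) T := by
  induction n with
  | zero =>
    have hb := balance a hk hA 0 T
    have hs := L_split a hk hA 0 T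
    have : pC a hk 0 T = nC a hk 0 T := by simp [pC]
    rw [this]
    norm_num at hb hs ⊢
    omega
  | succ n ih =>
    have hb := balance a hk hA ((n:ℤ)+1) T
    have hs := L_split a hk hA ((n:ℤ)+1) T
    have hadd : ((n:ℤ)+1) - 1 = (n:ℤ) := by ring
    rw [hadd] at hb hs
    have hne : ((n:ℤ)+1) ≠ 0 := by omega
    rw [if_neg hne] at hb
    have hp : pC a hk (n+1) T = pC a hk n T + nC a hk ((n:ℤ)+1) T := by
      rw [pC, Finset.range_add_one, Finset.sum_insert (by simp)]
      push_cast
      rw [pC]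
      omega
    have hc : ((n+1:ℕ) : ℤ) = (n:ℤ)+1 := by push_cast; ring
    rw [hc, hp]
    omega
section rBL

variable {c : ℕ → ℤ}

lemma leftsUpTo_zero (c : ℕ → ℤ) : leftsUpTo c 0 = 0 := by simp [leftsUpTo]

lemma sInf_lefts_spec (hL : ∀ J, ∃ s, J ≤ leftsUpTo c s) (j : ℕ) :
    leftsUpTo c (sInf {s | j ≤ leftsUpTo c s}) = j ∧
    ∀ s, leftsUpTo c s < j → s ≤ sInf {s | j ≤ leftsUpTo c s} := by
  have hne : {s | j ≤ leftsUpTo c s}.Nonempty := hL j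
  obtain ⟨m, hm⟩ : ∃ m, sInf {s | j ≤ leftsUpTo c s} = m := ⟨_, rfl⟩
  have hmem : j ≤ leftsUpTo c m := by rw [← hm]; exact Nat.sInf_mem hne
  rw [hm]
  have hmono : ∀ s, leftsUpTo c s < j → s ≤ m := by
    intro s hs
    by_contra hc
    push_neg at hc
    have h1 := leftsUpTo_mono c (le_of_lt hc)
    omega
  refine ⟨?_, hmono⟩
  rcases Nat.eq_zero_or_pos m with h0 | hpos
  · subst h0
    have := leftsUpTo_zero c
    omega
  · obtain ⟨s, rfl⟩ : ∃ s, m = s + 1 := ⟨m - 1, by omega⟩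
    have hlt : leftsUpTo c s < j := by
      by_contra hc
      push_neg at hc
      have h5 : sInf {s | j ≤ leftsUpTo c s} ≤ s := Nat.sInf_le hc
      rw [hm] at h5
      omega
    have := leftsUpTo_succ c s
    split_ifs at this <;> omega

lemma rBL_eq_rightsUpTo (hL : ∀ J, ∃ s, J ≤ leftsUpTo c s) (j : ℕ) :
    rightsBeforeLefts j c = rightsUpTo c (sInf {s | j ≤ leftsUpTo c s}) := by
  obtain ⟨h1, -⟩ := sInf_lefts_spec hL j
  have h2 := rights_add_lefts c (sInf {s | j ≤ leftsUpTo c s})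
  rw [rightsBeforeLefts]
  omega

lemma rightsUpTo_le_rBL (hL : ∀ J, ∃ s, J ≤ leftsUpTo c s) {j s : ℕ}
    (h : leftsUpTo c s < j) : rightsUpTo c s ≤ rightsBeforeLefts j c := by
  obtain ⟨-, h2⟩ := sInf_lefts_spec hL j
  rw [rBL_eq_rightsUpTo hL]
  exact rightsUpTo_mono c (h2 s h)

lemma rBL_mono (hL : ∀ J, ∃ s, J ≤ leftsUpTo c s) {j j' : ℕ} (h : j ≤ j') :
    rightsBeforeLefts j c ≤ rightsBeforeLefts j' c := by
  rcases eq_or_lt_of_le h with rfl | hlt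
  · exact le_rfl
  · obtain ⟨h1, -⟩ := sInf_lefts_spec hL j
    rw [rBL_eq_rightsUpTo hL j]
    exact rightsUpTo_le_rBL hL (by omega)

lemma rBL_eq_of {j s : ℕ} (h1 : leftsUpTo c s = j)
    (h2 : s = 0 ∨ leftsUpTo c (s - 1) < j) :
    rightsBeforeLefts j c = rightsUpTo c s := by
  have hmem : s ∈ {s | j ≤ leftsUpTo c s} := le_of_eq h1.symm
  have hinf : sInf {s | j ≤ leftsUpTo c s} = s := by
    refine le_antisymm (Nat.sInf_le hmem) ?_
    by_contra hc
    push_neg at hc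
    have hm := Nat.sInf_mem (⟨s, hmem⟩ : {s | j ≤ leftsUpTo c s}.Nonempty)
    set m := sInf {s | j ≤ leftsUpTo c s}
    rcases h2 with rfl | h2
    · omega
    · have : leftsUpTo c m ≤ leftsUpTo c (s-1) := leftsUpTo_mono c (by omega)
      have hm' : j ≤ leftsUpTo c m := hm
      omega
  have h3 := rights_add_lefts c s
  rw [rightsBeforeLefts, hinf]
  omega

end rBL

lemma lefts_unbounded (hA : IsArrow a) (hnd : NonDeg a) (x : ℤ) (J : ℕ) :
    ∃ s, J ≤ leftsUpTo (a x) s := by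
  induction J with
  | zero => exact ⟨0, Nat.zero_le _⟩
  | succ J ih =>
    obtain ⟨s, hs⟩ := ih
    obtain ⟨n, hn1, hn2⟩ := hnd x (s + 1)
    have hm : ∃ m, s + 1 ≤ m ∧ a x m = -1 := by
      rcases hA x n with h1 | h1
      · rcases hA x (n+1) with h2 | h2
        · exact absurd (h1.trans h2.symm) hn2
        · exact ⟨n+1, by omega, h2⟩
      · exact ⟨n, hn1, h1⟩
    obtain ⟨m, hm1, hm2⟩ := hm
    refine ⟨m, ?_⟩
    obtain ⟨m', rfl⟩ : ∃ m', m = m' + 1 := ⟨m - 1, by omega⟩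
    have h1 := leftsUpTo_succ (a x) m'
    have h2 : leftsUpTo (a x) s ≤ leftsUpTo (a x) m' := leftsUpTo_mono _ (by omega)
    rw [hm2] at h1
    norm_num at h1
    omega

lemma eventually_const {f : ℕ → ℕ} (mono : ∀ s t, s ≤ t → f s ≤ f t) (B : ℕ)
    (hb : ∀ t, f t ≤ B) : ∃ t0, ∀ t, t0 ≤ t → f t = f t0 := by
  classical
  set P : ℕ → Prop := fun v => ∃ t, f t = v with hP
  have hspec : P (Nat.findGreatest P B) :=
    Nat.findGreatest_spec (m := f 0) (hb 0) ⟨0, rfl⟩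
  obtain ⟨t0, ht0⟩ := hspec
  refine ⟨t0, fun t ht => ?_⟩
  have h1 : f t ≤ Nat.findGreatest P B := Nat.le_findGreatest (hb t) ⟨t, rfl⟩
  have h2 := mono t0 t ht
  omega

section NoHit

lemma xp_nonneg (hA : IsArrow a) (H : ∀ t, xp a hk t ≠ -1) (t : ℕ) : 0 ≤ xp a hk t := by
  induction t with
  | zero => rw [xp_zero]
  | succ t ih =>
    have h1 := xp_succ_ge a hk hA t
    have h2 := H (t+1)
    omega

lemma uC_neg_eq_zero {T : ℕ} (hpos : ∀ t, t < T → 0 ≤ xp a hk t) :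
    uC a hk (-1) T = 0 := by
  rw [uC, Finset.card_eq_zero, Finset.filter_eq_empty_iff]
  intro t ht
  rw [Finset.mem_range] at ht
  have := hpos t ht
  intro hc
  omega

lemma dC_neg_eq_zero {T : ℕ} (hpos : ∀ t, t ≤ T → 0 ≤ xp a hk t) :
    dC a hk (-1) T = 0 := by
  rw [dC, Finset.card_eq_zero, Finset.filter_eq_empty_iff]
  intro t ht
  rw [Finset.mem_range] at ht
  intro ⟨h1, h2⟩
  have h3 := xp_succ_le_mv a hk t
  have := hpos (t+1) ht
  omega

end NoHit
section Dir1
set_option linter.unusedSectionVars false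

variable (hA : IsArrow a) (hnd : NonDeg a) (H : ∀ t, xp a hk t ≠ -1)

include hA hnd H in
lemma col_bound : ∀ n : ℕ, ∃ B, ∀ t, (st a hk t).2 (n : ℤ) ≤ B := by
  intro n
  induction n using Nat.strong_induction_on with
  | _ n ih =>
  by_contra hB
  push_neg at hB
  have hd : ∀ J, ∃ t, J ≤ dC a hk ((n:ℤ) - 1) t := by
    intro J
    obtain ⟨s, hs⟩ := lefts_unbounded a hA hnd (n : ℤ) J
    obtain ⟨t, ht⟩ := hB s
    refine ⟨t, ?_⟩
    have h1 := (reads a hk hA (n : ℤ) t).2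
    have h2 := leftsUpTo_mono (a (n:ℤ)) (le_of_lt ht)
    omega
  rcases Nat.eq_zero_or_pos n with rfl | hpos
  · obtain ⟨t, ht⟩ := hd 1
    rw [show ((0:ℕ):ℤ) - 1 = -1 by norm_num] at ht
    rw [dC_neg_eq_zero a hk fun s _ => xp_nonneg a hk hA H s] at ht
    omega
  · obtain ⟨m, rfl⟩ : ∃ m, n = m + 1 := ⟨n - 1, by omega⟩
    obtain ⟨B, hBm⟩ := ih m (by omega)
    obtain ⟨t, ht⟩ := hd (B + k + 1)
    have hb := balance a hk hA (m : ℤ) t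
    have hnc := nC_le a hk (m : ℤ) t
    have hc : ((m+1:ℕ):ℤ) - 1 = (m:ℤ) := by push_cast; ring
    rw [hc] at ht
    have hLm := hBm t
    split_ifs at hb <;> omega

include hA hnd H in
lemma stable (n : ℕ) : ∃ T0, ∀ t, T0 ≤ t → (n:ℤ) < xp a hk t := by
  have hconst : ∃ T0, ∀ m : ℕ, m ≤ n → ∀ t, T0 ≤ t →
      (st a hk t).2 (m:ℤ) = (st a hk T0).2 (m:ℤ) := by
    induction n with
    | zero =>
      obtain ⟨B, hB⟩ := col_bound a hk hA hnd H 0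
      have hmono : ∀ s t, s ≤ t → (st a hk s).2 (0:ℤ) ≤ (st a hk t).2 (0:ℤ) := by
        intro s t hst
        rw [lt_card, lt_card]
        exact Finset.card_le_card
          (Finset.filter_subset_filter _ (Finset.range_subset_range.mpr hst))
      obtain ⟨t0, ht0⟩ := eventually_const hmono B hB
      exact ⟨t0, fun m hm t ht => by
        obtain rfl : m = 0 := by omega
        exact ht0 t ht⟩
    | succ n ihn =>
      obtain ⟨T0, hT0⟩ := ihn
      obtain ⟨B, hB⟩ := col_bound a hk hA hnd H (n+1)
      have hmono : ∀ s t, s ≤ t → (st a hk s).2 ((n+1:ℕ):ℤ) ≤ (st a hk t).2 ((n+1:ℕ):ℤ) := by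
        intro s t hst
        rw [lt_card, lt_card]
        exact Finset.card_le_card
          (Finset.filter_subset_filter _ (Finset.range_subset_range.mpr hst))
      obtain ⟨t1, ht1⟩ := eventually_const hmono B hB
      refine ⟨max T0 t1, fun m hm t ht => ?_⟩
      rcases Nat.lt_or_ge m (n+1) with hlt | hge
      · rw [hT0 m (by omega) t (le_trans (le_max_left _ _) ht),
          hT0 m (by omega) (max T0 t1) (le_max_left _ _)]
      · obtain rfl : m = n + 1 := by omega
        rw [ht1 t (le_trans (le_max_right _ _) ht),
          ht1 (max T0 t1) (le_max_right _ _)]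
  obtain ⟨T0, hT0⟩ := hconst
  refine ⟨T0, fun t ht => ?_⟩
  by_contra hc
  push_neg at hc
  have hx0 := xp_nonneg a hk hA H t
  set x := xp a hk t with hx
  have hmx : ((x.toNat : ℕ) : ℤ) = x := Int.toNat_of_nonneg hx0
  have hmn : x.toNat ≤ n := by omega
  have h1 : (st a hk (t+1)).2 x = (st a hk t).2 x + 1 := by
    rw [st2_succ, ← hx, Function.update_self]
  have h2 := hT0 x.toNat hmn t ht
  have h3 := hT0 x.toNat hmn (t+1) (by omega)
  rw [hmx] at h2 h3
  omega

include hA hnd H in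
lemma nC_stable {n : ℕ} {T0 : ℕ} (hT0 : ∀ t, T0 ≤ t → (n:ℤ) < xp a hk t)
    {t : ℕ} (ht : T0 ≤ t) {x : ℤ} (hx : x ≤ (n:ℤ)) : nC a hk x t = 0 := by
  rw [nC, Finset.card_eq_zero, Finset.filter_eq_empty_iff]
  intro j _
  have h1 := xp_le a hk t j
  have h2 := hT0 t ht
  intro hc
  omega

include hA hnd H in
lemma pC_stable {n : ℕ} {T0 : ℕ} (hT0 : ∀ t, T0 ≤ t → (n:ℤ) < xp a hk t)
    {t : ℕ} (ht : T0 ≤ t) {m : ℕ} (hm : m ≤ n) : pC a hk m t = 0 := by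
  rw [pC, Finset.sum_eq_zero]
  intro i hi
  rw [Finset.mem_range] at hi
  exact nC_stable a hk hA hnd H hT0 ht (by omega)

include hA hnd H in
lemma dir1 : ∀ n : ℕ, k ≤ zProc a k n ∧ ∀ t, uC a hk ((n:ℤ) - 1) t ≤ zProc a k n := by
  intro n
  induction n with
  | zero =>
    refine ⟨le_rfl, fun t => ?_⟩
    rw [show ((0:ℕ):ℤ) - 1 = -1 by norm_num,
      uC_neg_eq_zero a hk fun s _ => xp_nonneg a hk hA H s]
    exact Nat.zero_le _
  | succ n ih =>
    obtain ⟨hzk, hu⟩ := ih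
    have hz1 : zProc a k (n+1) = rightsBeforeLefts (zProc a k n - (k-1)) (a (n:ℤ)) := by
      rw [zProc, if_pos hzk]
    have hL := lefts_unbounded a hA hnd (n:ℤ)
    have hdC : ∀ t, dC a hk ((n:ℤ) - 1) t ≤ zProc a k n - k := by
      intro t
      rcases Nat.eq_zero_or_pos n with rfl | hpos
      · rw [show ((0:ℕ):ℤ) - 1 = -1 by norm_num,
          dC_neg_eq_zero a hk fun s _ => xp_nonneg a hk hA H s]
        exact Nat.zero_le _
      · obtain ⟨m, rfl⟩ : ∃ m, n = m + 1 := ⟨n - 1, by omega⟩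
        obtain ⟨T0, hT0⟩ := stable a hk hA hnd H m
        set t' := max t T0 with ht'
        have h1 : dC a hk (((m+1:ℕ):ℤ) - 1) t ≤ dC a hk (((m+1:ℕ):ℤ) - 1) t' :=
          dC_mono a hk _ (le_max_left _ _)
        have hsb := sum_balance a hk hA m t'
        have hpc : pC a hk m t' = 0 :=
          pC_stable a hk hA hnd H hT0 (le_max_right _ _) le_rfl
        have hun : uC a hk (-1) t' = 0 :=
          uC_neg_eq_zero a hk fun s _ => xp_nonneg a hk hA H s
        have hdn : dC a hk (-1) t' = 0 :=
          dC_neg_eq_zero a hk fun s _ => xp_nonneg a hk hA H s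
        have hut : uC a hk (((m+1:ℕ):ℤ) - 1) t' ≤ zProc a k (m+1) := hu t'
        have hc : ((m+1:ℕ):ℤ) - 1 = (m:ℤ) := by push_cast; ring
        rw [hc] at h1 hut ⊢
        omega
    have hB : ∀ t, uC a hk (n:ℤ) t ≤ zProc a k (n+1) := by
      intro t
      have h1 := (reads a hk hA (n:ℤ) t).1
      have h2 := (reads a hk hA (n:ℤ) t).2
      have h3 := hdC t
      have hlt : leftsUpTo (a (n:ℤ)) ((st a hk t).2 (n:ℤ)) < zProc a k n - (k-1) := by
        omega
      have h4 := rightsUpTo_le_rBL hL hlt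
      rw [hz1]
      omega
    have hC : k ≤ zProc a k (n+1) := by
      obtain ⟨T0, hT0⟩ := stable a hk hA hnd H n
      have hsb := sum_balance a hk hA n T0
      have hpc : pC a hk n T0 = 0 :=
        pC_stable a hk hA hnd H hT0 le_rfl le_rfl
      have hun : uC a hk (-1) T0 = 0 :=
        uC_neg_eq_zero a hk fun s _ => xp_nonneg a hk hA H s
      have hdn : dC a hk (-1) T0 = 0 :=
        dC_neg_eq_zero a hk fun s _ => xp_nonneg a hk hA H s
      have := hB T0
      omega
    refine ⟨hC, fun t => ?_⟩
    rw [show ((n+1:ℕ):ℤ) - 1 = (n:ℤ) by push_cast; ring]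
    exact hB t

end Dir1
section Dir2
set_option linter.unusedSectionVars false

variable (hA : IsArrow a) {T : ℕ} (hT : xp a hk T = -1)
  (hlt : ∀ t, t < T → xp a hk t ≠ -1)

include hA hT hlt

lemma hit_pos : ∀ t, t < T → 0 ≤ xp a hk t := by
  intro t
  induction t with
  | zero => intro _; rw [xp_zero]
  | succ t ih =>
    intro ht
    have h1 := ih (by omega)
    have h2 := xp_succ_ge a hk hA t
    have h3 := hlt (t+1) ht
    omega

lemma hit_T_pos : 1 ≤ T := by
  rcases Nat.eq_zero_or_pos T with rfl | h
  · rw [xp_zero] at hT; omega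
  · omega

lemma hit_last : xp a hk (T-1) = 0 ∧ mv a hk (T-1) = -1 := by
  have h0 := hit_T_pos a hk hA hT hlt
  have h1 : T - 1 + 1 = T := by omega
  have h2 := xp_succ_ge a hk hA (T-1)
  rw [h1, hT] at h2
  have h3 := hit_pos a hk hA hT hlt (T-1) (by omega)
  have hx : xp a hk (T-1) = 0 := by omega
  refine ⟨hx, ?_⟩
  have h4 : xp a hk (T-1+1) < xp a hk (T-1) := by rw [h1, hT]; omega
  have h5 := mv_of_lt a hk (T-1) h4
  rw [h1, hT] at h5
  exact h5

lemma hit_dC_neg : 1 ≤ dC a hk (-1) T := by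
  have h0 := hit_T_pos a hk hA hT hlt
  obtain ⟨hx, hm⟩ := hit_last a hk hA hT hlt
  rw [dC]
  refine Finset.card_pos.mpr ⟨T-1, Finset.mem_filter.mpr ⟨Finset.mem_range.mpr (by omega), ?_, hm⟩⟩
  rw [hx]; norm_num

lemma last_left (n : ℕ) (t₀ : ℕ) (ht₀ : t₀ < T) (hx : xp a hk t₀ = (n:ℤ))
    (hmax : ∀ s, t₀ < s → s < T → xp a hk s ≠ (n:ℤ)) :
    mv a hk t₀ = (n:ℤ) - 1 := by
  rcases mv_cases a hk hA t₀ with hr | hl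
  swap
  · rw [hl, hx]
  exfalso
  have h0 := hit_T_pos a hk hA hT hlt
  obtain ⟨hxT1, hmT1⟩ := hit_last a hk hA hT hlt
  have ht₀T : t₀ ≠ T - 1 := by
    intro he
    rw [he, hmT1] at hr
    rw [he, hxT1] at hx
    omega
  have hex : ∃ s, t₀ < s ∧ s ≤ T ∧ xp a hk s < (n:ℤ) :=
    ⟨T, by omega, le_rfl, by rw [hT]; omega⟩
  obtain ⟨hs1a, hs1b, hs1c⟩ := Nat.find_spec hex
  set s₁ := Nat.find hex with hs₁
  have hstep1 : ∀ i, (n:ℤ) ≤ (st a hk (t₀+1)).1 i := by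
    intro i
    rw [st1_succ]
    rcases eq_or_ne i (minIdx hk (st a hk t₀).1) with rfl | hi
    · rw [Function.update_self]; omega
    · rw [Function.update_of_ne hi]
      have := xp_le a hk t₀ i
      omega
  have hxt1 : (n:ℤ) ≤ xp a hk (t₀+1) := by
    rw [xp_def]; exact hstep1 _
  have hs2 : t₀ + 2 ≤ s₁ := by
    by_contra hcon
    push_neg at hcon
    have he : s₁ = t₀ + 1 := by omega
    rw [he] at hs1c
    omega
  have hprev := Nat.find_min hex (m := s₁ - 1) (by omega)
  push_neg at hprev
  have hp1 : (n:ℤ) ≤ xp a hk (s₁ - 1) := hprev (by omega) (by omega)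
  have hp2 : xp a hk (s₁ - 1) - 1 ≤ xp a hk s₁ := by
    have := xp_succ_ge a hk hA (s₁ - 1)
    rwa [show s₁ - 1 + 1 = s₁ by omega] at this
  have hp3 : xp a hk (s₁ - 1) = (n:ℤ) := by omega
  exact hmax (s₁ - 1) (by omega) (by omega) hp3

lemma rBL_key (n : ℕ) (hd1 : 1 ≤ dC a hk ((n:ℤ)-1) T) :
    rightsBeforeLefts (dC a hk ((n:ℤ)-1) T) (a (n:ℤ)) = uC a hk (n:ℤ) T := by
  have hr := (reads a hk hA (n:ℤ) T).1
  have hl := (reads a hk hA (n:ℤ) T).2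
  have hsplit := L_split a hk hA (n:ℤ) T
  have hLpos : 1 ≤ (st a hk T).2 (n:ℤ) := by omega
  set F := (Finset.range T).filter (fun t => xp a hk t = (n:ℤ)) with hF
  have hFcard : (st a hk T).2 (n:ℤ) = F.card := lt_card a hk _ T
  have hFne : F.Nonempty := Finset.card_pos.mp (by omega)
  set t₀ := F.max' hFne with ht₀def
  have ht₀F : t₀ ∈ F := F.max'_mem hFne
  rw [hF, Finset.mem_filter, Finset.mem_range] at ht₀F
  obtain ⟨ht₀T, hxt₀⟩ := ht₀F
  have hmax : ∀ s, t₀ < s → s < T → xp a hk s ≠ (n:ℤ) := by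
    intro s h1 h2 hc
    have : s ≤ t₀ := F.le_max' s (Finset.mem_filter.mpr ⟨Finset.mem_range.mpr h2, hc⟩)
    omega
  have hmv := last_left a hk hA hT hlt n t₀ ht₀T hxt₀ hmax
  have harr : a (n:ℤ) ((st a hk t₀).2 (n:ℤ) + 1) = -1 := by
    have hme := mv_eq a hk t₀
    rw [hxt₀] at hme
    rw [hmv] at hme
    omega
  have hstep : (st a hk (t₀+1)).2 (n:ℤ) = (st a hk t₀).2 (n:ℤ) + 1 := by
    rw [st2_succ, ← hxt₀, Function.update_self]
  have hfreeze : (st a hk T).2 (n:ℤ) = (st a hk (t₀+1)).2 (n:ℤ) := by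
    rw [lt_card, lt_card]
    congr 1
    apply Finset.ext
    intro s
    rw [Finset.mem_filter, Finset.mem_filter, Finset.mem_range, Finset.mem_range]
    constructor
    · rintro ⟨h1, h2⟩
      have : s ≤ t₀ := F.le_max' s (Finset.mem_filter.mpr ⟨Finset.mem_range.mpr h1, h2⟩)
      exact ⟨by omega, h2⟩
    · rintro ⟨h1, h2⟩
      exact ⟨by omega, h2⟩
  have hLT : (st a hk T).2 (n:ℤ) = (st a hk t₀).2 (n:ℤ) + 1 := by rw [hfreeze, hstep]
  have harr2 : a (n:ℤ) ((st a hk T).2 (n:ℤ)) = -1 := by rw [hLT]; exact harr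
  have hlsucc := leftsUpTo_succ (a (n:ℤ)) ((st a hk T).2 (n:ℤ) - 1)
  rw [show (st a hk T).2 (n:ℤ) - 1 + 1 = (st a hk T).2 (n:ℤ) by omega, harr2] at hlsucc
  norm_num at hlsucc
  have hkey := rBL_eq_of (c := a (n:ℤ)) (j := dC a hk ((n:ℤ)-1) T)
    (s := (st a hk T).2 (n:ℤ)) hl (Or.inr (by omega))
  rw [hkey, hr]

end Dir2

lemma dir2 (hA : IsArrow a) (hnd : NonDeg a) (h : ∃ t, xp a hk t = -1) :
    ∃ n, zProc a k n = 0 := by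
  by_contra hz
  push_neg at hz
  have hT : xp a hk (Nat.find h) = -1 := Nat.find_spec h
  have hlt : ∀ t, t < Nat.find h → xp a hk t ≠ -1 := fun t ht => Nat.find_min h ht
  set T := Nat.find h with hTdef
  have hzk : ∀ n, k ≤ zProc a k n := by
    intro n
    by_contra hc
    push_neg at hc
    have h2 := hz (n+1)
    rw [zProc, if_neg (by omega)] at h2
    exact h2 rfl
  have hpos := hit_pos a hk hA hT hlt
  have hd0 := hit_dC_neg a hk hA hT hlt
  have hun : uC a hk (-1) T = 0 := uC_neg_eq_zero a hk hpos
  have hineq : ∀ n : ℕ, uC a hk (n:ℤ) T + 1 ≤ k + dC a hk (n:ℤ) T := by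
    intro n
    have := sum_balance a hk hA n T
    omega
  have hinv : ∀ n : ℕ, zProc a k n ≤ dC a hk ((n:ℤ)-1) T + (k-1) := by
    intro n
    induction n with
    | zero =>
      rw [show ((0:ℕ):ℤ) - 1 = -1 by norm_num]
      have : zProc a k 0 = k := rfl
      omega
    | succ n ih =>
      have hzkn := hzk n
      have hd1 : 1 ≤ dC a hk ((n:ℤ)-1) T := by omega
      have hkey := rBL_key a hk hA hT hlt n hd1
      have hz1 : zProc a k (n+1)
          = rightsBeforeLefts (zProc a k n - (k-1)) (a (n:ℤ)) := by
        rw [zProc, if_pos hzkn]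
      have hmono := rBL_mono (lefts_unbounded a hA hnd (n:ℤ))
        (j := zProc a k n - (k-1)) (j' := dC a hk ((n:ℤ)-1) T) (by omega)
      have hiq := hineq n
      rw [show ((n+1:ℕ):ℤ) - 1 = (n:ℤ) by push_cast; ring]
      omega
  have hfin := hinv (T+1)
  have hdT : dC a hk (((T+1:ℕ):ℤ)-1) T = 0 := by
    rw [dC, Finset.card_eq_zero, Finset.filter_eq_empty_iff]
    intro t ht
    rw [Finset.mem_range] at ht
    rintro ⟨h1, h2⟩
    have := xp_le_self a hk hA t
    rw [h1] at this
    push_cast at this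
    omega
  have := hzk (T+1)
  rw [hdT] at hfin
  omega
lemma main_iff (hA : IsArrow a) (hnd : NonDeg a) :
    (∃ t, minWalkPos a hk (fun _ => 0) t = -1) ↔ ∃ n, zProc a k n = 0 := by
  constructor
  · intro h
    exact dir2 a hk hA hnd h
  · rintro ⟨n, hn⟩
    by_contra hno
    push_neg at hno
    have h1 := (dir1 a hk hA hnd hno n).1
    rw [hn] at h1
    omega

end S7

/-- For a non-degenerate arrow environment, the hitting time of `-1` by the
`k`-minimum walk is finite iff the deterministic process `z` hits `0`. -/
theorem hit_neg_one_iff_zProc_eq_zero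
    (a : Env) (hA : IsArrow a) (hnd : NonDeg a) {k : ℕ} (hk : k ≠ 0) :
    (∃ t, minWalkPos a hk (fun _ => 0) t = -1) ↔ ∃ n, zProc a k n = 0 := by
  exact S7.main_iff a hk hA hnd

end
end

section
/- For all n ≥ 0: if t_{-1} < ∞ then z_n = w_n, and if t_{-1} = ∞ then z_n ≥ w_n, where z is the process defined from the arrow environment and w_n counts the non-left-moves from position n-1 before time t_{-1} by the k-min mob walk. -/
open MeasureTheory Filter

noncomputable section

attribute [local instance 10] Classical.propDecidable

namespace ZWAux

variable (a : Env) {k : ℕ} (hk : k ≠ 0)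

/-- Position of the moving (minimal) particle at time `t`. -/
def X (t : ℕ) : ℤ := minWalkPos a hk (fun _ => 0) t

/-- Position reached by the particle moved at step `t`. -/
def Y (t : ℕ) : ℤ := minMoveTo a hk (fun _ => 0) t

/-- Particle positions at time `t`. -/
def P (t : ℕ) : Fin k → ℤ := (minMobState a hk (fun _ => 0) t).1

/-- Local times at time `t`. -/
def LT (t : ℕ) (x : ℤ) : ℕ := (minMobState a hk (fun _ => 0) t).2 x

lemma minIdx_le (Z : Fin k → ℤ) (i : Fin k) : Z (minIdx hk Z) ≤ Z i := by
  have h : minIdx hk Z ∈ Finset.univ.filter (fun j => ∀ i, Z j ≤ Z i) :=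
    Finset.min'_mem _ _
  exact (Finset.mem_filter.mp h).2 i

lemma X_eq (t : ℕ) : X a hk t = P a hk t (minIdx hk (P a hk t)) := rfl

lemma X_le (t : ℕ) (i : Fin k) : X a hk t ≤ P a hk t i := minIdx_le hk _ i

lemma P_zero : P a hk 0 = fun _ => 0 := rfl

lemma LT_zero (x : ℤ) : LT a hk 0 x = 0 := rfl

lemma state_succ (t : ℕ) :
    minMobState a hk (fun _ => 0) (t + 1) =
      (Function.update (P a hk t) (minIdx hk (P a hk t))
          (X a hk t + a (X a hk t) (LT a hk t (X a hk t) + 1)),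
        Function.update (LT a hk t) (X a hk t) (LT a hk t (X a hk t) + 1)) := by
  conv_lhs => rw [minMobState]
  simp only [Function.update_self]
  rfl

lemma LT_succ (t : ℕ) (x : ℤ) :
    LT a hk (t + 1) x = if x = X a hk t then LT a hk t x + 1 else LT a hk t x := by
  show (minMobState a hk (fun _ => 0) (t + 1)).2 x = _
  rw [state_succ]
  dsimp only
  rw [Function.update_apply]
  split <;> simp_all

lemma Y_eq (t : ℕ) :
    Y a hk t = X a hk t + a (X a hk t) (LT a hk t (X a hk t) + 1) := by
  show (minMobState a hk (fun _ => 0) (t + 1)).1 (minIdx hk (minMobState a hk (fun _ => 0) t).1) = _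
  rw [state_succ]
  exact Function.update_self _ _ _

lemma P_succ_apply (t : ℕ) (i : Fin k) :
    P a hk (t + 1) i = if i = minIdx hk (P a hk t) then Y a hk t else P a hk t i := by
  show (minMobState a hk (fun _ => 0) (t + 1)).1 i = _
  rw [state_succ]
  dsimp only
  rw [Function.update_apply]
  split
  · rw [Y_eq]
  · rfl

lemma Y_pm (hA : IsArrow a) (t : ℕ) :
    Y a hk t = X a hk t + 1 ∨ Y a hk t = X a hk t - 1 := by
  rcases hA (X a hk t) (LT a hk t (X a hk t) + 1) with h | h <;>
    rw [Y_eq, h] <;> [left; right] <;> ring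

end ZWAux
namespace ZWAux

section Counting

variable (a : Env) {k : ℕ} (hk : k ≠ 0)

/-- Number of particles strictly to the left of `x` at time `t`. -/
def B (x : ℤ) (t : ℕ) : ℕ := (Finset.univ.filter (fun j : Fin k => P a hk t j < x)).card

/-- Number of right moves from `x` among the first `T` steps. -/
def RM (x : ℤ) (T : ℕ) : ℕ :=
  ((Finset.range T).filter (fun t => X a hk t = x ∧ Y a hk t = x + 1)).card

/-- Number of left moves from `x` among the first `T` steps. -/
def LM (x : ℤ) (T : ℕ) : ℕ :=
  ((Finset.range T).filter (fun t => X a hk t = x ∧ Y a hk t = x - 1)).card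

/-- Incoming count at site `x` (right crossings into `[x, ∞)` plus initial mass). -/
def Cin (x : ℕ) (T : ℕ) : ℕ := RM a hk ((x : ℤ) - 1) T + (if x = 0 then k else 0)

lemma card_filter_range_succ (p : ℕ → Prop) [DecidablePred p] (T : ℕ) :
    ((Finset.range (T + 1)).filter p).card =
      ((Finset.range T).filter p).card + (if p T then 1 else 0) := by
  rw [Finset.range_add_one, Finset.filter_insert]
  split_ifs with h
  · rw [Finset.card_insert_of_notMem (by simp)]
  · simp

lemma RM_succ (x : ℤ) (T : ℕ) :
    RM a hk x (T + 1) = RM a hk x T +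
      (if X a hk T = x ∧ Y a hk T = x + 1 then 1 else 0) := by
  apply card_filter_range_succ

lemma LM_succ (x : ℤ) (T : ℕ) :
    LM a hk x (T + 1) = LM a hk x T +
      (if X a hk T = x ∧ Y a hk T = x - 1 then 1 else 0) := by
  apply card_filter_range_succ

lemma RM_zero' (x : ℤ) : RM a hk x 0 = 0 := by simp [RM]

lemma LM_zero (x : ℤ) : LM a hk x 0 = 0 := by simp [LM]

lemma RM_mono (x : ℤ) {T T' : ℕ} (h : T ≤ T') : RM a hk x T ≤ RM a hk x T' :=
  Finset.card_le_card (Finset.filter_subset_filter _ (Finset.range_subset_range.mpr h))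

lemma LM_mono (x : ℤ) {T T' : ℕ} (h : T ≤ T') : LM a hk x T ≤ LM a hk x T' :=
  Finset.card_le_card (Finset.filter_subset_filter _ (Finset.range_subset_range.mpr h))

lemma Cin_mono (x : ℕ) {T T' : ℕ} (h : T ≤ T') : Cin a hk x T ≤ Cin a hk x T' :=
  Nat.add_le_add_right (RM_mono a hk _ h) _

lemma LM_step_or (x : ℤ) (t : ℕ) :
    LM a hk x (t + 1) = LM a hk x t ∨ LM a hk x (t + 1) = LM a hk x t + 1 := by
  rw [LM_succ]; split_ifs <;> omega

/-- The set of left-of-`x` particles never has a member if the walker sits at `x`. -/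
lemma B_eq_zero_of_X (x : ℤ) (t : ℕ) (h : X a hk t = x) : B a hk x t = 0 := by
  rw [B, Finset.card_eq_zero, Finset.filter_eq_empty_iff]
  intro i _
  have := X_le a hk t i
  omega

lemma one_le_B (x : ℤ) (t : ℕ) (h : X a hk t < x) : 1 ≤ B a hk x t := by
  rw [B]
  apply Finset.card_pos.mpr
  exact ⟨minIdx hk (P a hk t), Finset.mem_filter.mpr ⟨Finset.mem_univ _, by rw [← X_eq]; exact h⟩⟩

lemma B_zero (x : ℤ) : B a hk x 0 = if 0 < x then k else 0 := by
  rw [B]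
  split_ifs with h
  · rw [Finset.filter_true_of_mem (fun i _ => by rw [P_zero]; exact h)]
    simp
  · rw [Finset.filter_false_of_mem (fun i _ => by rw [P_zero]; simpa using h)]
    simp

lemma B_succ (x : ℤ) (t : ℕ) :
    B a hk x (t + 1) + (if X a hk t < x then 1 else 0) =
      B a hk x t + (if Y a hk t < x then 1 else 0) := by
  classical
  have hupd : (fun i : Fin k => if P a hk (t + 1) i < x then 1 else 0)
      = Function.update (fun i : Fin k => if P a hk t i < x then 1 else 0)
          (minIdx hk (P a hk t)) (if Y a hk t < x then 1 else 0) := by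
    funext i
    rw [P_succ_apply, Function.update_apply]
    by_cases h : i = minIdx hk (P a hk t) <;> simp [h]
  have hj : minIdx hk (P a hk t) ∈ (Finset.univ : Finset (Fin k)) := Finset.mem_univ _
  rw [B, B, Finset.card_filter, Finset.card_filter, hupd,
    Finset.sum_update_of_mem hj, ← Finset.add_sum_erase _ _ hj, ← X_eq]
  rw [Finset.sdiff_singleton_eq_erase]
  omega

/-- If the step at time `t` is not a left move from `x`, `B x` does not increase. -/
lemma B_succ_le (hA : IsArrow a) (x : ℤ) (t : ℕ)
    (h : ¬(X a hk t = x ∧ Y a hk t = x - 1)) : B a hk x (t + 1) ≤ B a hk x t := by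
  have hB := B_succ a hk x t
  by_cases hx : X a hk t = x
  · have hy : Y a hk t ≠ x - 1 := fun hy => h ⟨hx, hy⟩
    rcases Y_pm a hk hA t with h' | h' <;> split_ifs at hB <;> omega
  · rcases Y_pm a hk hA t with h' | h' <;> split_ifs at hB <;> omega

/-- Flow conservation across the edge `(x-1, x)`. -/
lemma flow (hA : IsArrow a) (x : ℤ) (t : ℕ) :
    B a hk x t + RM a hk (x - 1) t = B a hk x 0 + LM a hk x t := by
  induction t with
  | zero => simp [RM_zero', LM_zero]
  | succ t ih =>
    have hB := B_succ a hk x t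
    have hRM := RM_succ a hk (x - 1) t
    have hLM := LM_succ a hk x t
    have hx1 : x - 1 + 1 = x := by ring
    rw [hx1] at hRM
    rcases Y_pm a hk hA t with h' | h' <;> split_ifs at hB hRM hLM <;> omega

/-- Uniform flow identity for nonnegative sites. -/
lemma flowU (hA : IsArrow a) (x : ℕ) (t : ℕ) :
    B a hk (x : ℤ) t + Cin a hk x t = k + LM a hk (x : ℤ) t := by
  have h := flow a hk hA (x : ℤ) t
  rw [Cin]
  by_cases hx : x = 0
  · subst hx
    have h0 : B a hk ((0:ℕ):ℤ) 0 = 0 := by rw [B_zero]; norm_num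
    rw [if_pos rfl]
    omega
  · have h0 : B a hk (x:ℤ) 0 = k := by
      rw [B_zero, if_pos (by exact_mod_cast Nat.pos_of_ne_zero hx)]
    rw [if_neg hx]
    omega

/-- Budget: each left move from `x` needs `k` plus previous left moves of incoming mass. -/
lemma budget (hA : IsArrow a) (x : ℕ) (t : ℕ) :
    LM a hk (x : ℤ) t = 0 ∨ k + LM a hk (x : ℤ) t ≤ Cin a hk x t + 1 := by
  induction t with
  | zero => left; exact LM_zero a hk _
  | succ t ih =>
    have hLM := LM_succ a hk (x : ℤ) t
    have hmono := Cin_mono a hk x (by omega : t ≤ t + 1)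
    by_cases hc : X a hk t = (x : ℤ) ∧ Y a hk t = (x : ℤ) - 1
    · right
      have hB0 := B_eq_zero_of_X a hk _ t hc.1
      have hf := flowU a hk hA x t
      rw [if_pos hc] at hLM
      omega
    · rw [if_neg hc] at hLM
      rcases ih with h | h
      · left; omega
      · right; omega

/-- Once a left move from `x` happened, at most one particle is left of `x`. -/
lemma B_le_one (hA : IsArrow a) (x : ℤ) (t : ℕ) (h : 1 ≤ LM a hk x t) :
    B a hk x t ≤ 1 := by
  induction t with
  | zero => rw [LM_zero] at h; omega
  | succ t ih =>
    have hLM := LM_succ a hk x t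
    by_cases hc : X a hk t = x ∧ Y a hk t = x - 1
    · have hB0 := B_eq_zero_of_X a hk x t hc.1
      have hB := B_succ a hk x t
      split_ifs at hB <;> omega
    · rw [if_neg hc] at hLM
      have := B_succ_le a hk hA x t hc
      have := ih (by omega)
      omega

/-- If `B x` was `0` and later is positive, a left move from `x` happened in between. -/
lemma exists_leftmove (hA : IsArrow a) (x : ℤ) {s t : ℕ} (hst : s ≤ t)
    (h0 : B a hk x s = 0) (h1 : 1 ≤ B a hk x t) :
    ∃ u, s ≤ u ∧ u < t ∧ X a hk u = x ∧ Y a hk u = x - 1 := by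
  induction t with
  | zero =>
    have : s = 0 := by omega
    subst this; omega
  | succ t ih =>
    by_cases hst' : s = t + 1
    · subst hst'; omega
    · have hst'' : s ≤ t := by omega
      by_cases hc : X a hk t = x ∧ Y a hk t = x - 1
      · exact ⟨t, hst'', Nat.lt_succ_self t, hc.1, hc.2⟩
      · have hle := B_succ_le a hk hA x t hc
        obtain ⟨u, hu1, hu2, hu3, hu4⟩ := ih hst'' (by omega)
        exact ⟨u, hu1, by omega, hu3, hu4⟩

end Counting

end ZWAux
namespace ZWAux

section Seq

lemma rightsUpTo_succ (c : ℕ → ℤ) (m : ℕ) :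
    rightsUpTo c (m + 1) = rightsUpTo c m + (if c (m + 1) = 1 then 1 else 0) := by
  rw [rightsUpTo, rightsUpTo, ← Finset.insert_Icc_right_eq_Icc_add_one (by omega), Finset.filter_insert]
  split_ifs with h
  · rw [Finset.card_insert_of_notMem (by simp)]
  · simp

lemma leftsUpTo_succ (c : ℕ → ℤ) (m : ℕ) :
    leftsUpTo c (m + 1) = leftsUpTo c m + (if c (m + 1) = 1 then 0 else 1) := by
  rw [leftsUpTo, leftsUpTo, ← Finset.insert_Icc_right_eq_Icc_add_one (by omega), Finset.filter_insert]
  by_cases h : c (m + 1) = 1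
  · rw [if_neg (not_not_intro h), if_pos h]
    omega
  · rw [if_pos h, if_neg h, Finset.card_insert_of_notMem (by simp)]

lemma rightsUpTo_zero (c : ℕ → ℤ) : rightsUpTo c 0 = 0 := by simp [rightsUpTo]

lemma leftsUpTo_zero (c : ℕ → ℤ) : leftsUpTo c 0 = 0 := by simp [leftsUpTo]

lemma rightsUpTo_mono (c : ℕ → ℤ) {m m' : ℕ} (h : m ≤ m') :
    rightsUpTo c m ≤ rightsUpTo c m' :=
  Finset.card_le_card (Finset.filter_subset_filter _ (Finset.Icc_subset_Icc_right h))

lemma leftsUpTo_mono (c : ℕ → ℤ) {m m' : ℕ} (h : m ≤ m') :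
    leftsUpTo c m ≤ leftsUpTo c m' :=
  Finset.card_le_card (Finset.filter_subset_filter _ (Finset.Icc_subset_Icc_right h))

lemma rights_add_lefts (c : ℕ → ℤ) (m : ℕ) :
    rightsUpTo c m + leftsUpTo c m = m := by
  classical
  have h := Finset.card_filter_add_card_filter_not
    (s := Finset.Icc 1 m) (p := fun i => c i = 1)
  rw [Nat.card_Icc] at h
  have : m + 1 - 1 = m := by omega
  rw [this] at h
  rw [rightsUpTo, leftsUpTo]
  convert h using 3 <;> apply Finset.filter_congr_decidable

end Seq

section Consumed

variable (a : Env) {k : ℕ} (hk : k ≠ 0)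

/-- The moves from site `x` consume the arrows of column `x` in order. -/
lemma consumed (hA : IsArrow a) (x : ℤ) (t : ℕ) :
    RM a hk x t = rightsUpTo (a x) (LT a hk t x) ∧
      LM a hk x t = leftsUpTo (a x) (LT a hk t x) := by
  induction t with
  | zero =>
    exact ⟨by rw [RM_zero', LT_zero, rightsUpTo_zero],
      by rw [LM_zero, LT_zero, leftsUpTo_zero]⟩
  | succ t ih =>
    obtain ⟨ih1, ih2⟩ := ih
    have hRM := RM_succ a hk x t
    have hLM := LM_succ a hk x t
    have hLT := LT_succ a hk t x
    have hra := rightsUpTo_succ (a x) (LT a hk t x)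
    have hla := leftsUpTo_succ (a x) (LT a hk t x)
    by_cases hx : X a hk t = x
    · rw [if_pos hx.symm] at hLT
      have hY := Y_eq a hk t
      rw [hx] at hY
      rcases hA x (LT a hk t x + 1) with h | h
      · have hY' : Y a hk t = x + 1 := by rw [hY, h]
        have e1 : (if X a hk t = x ∧ Y a hk t = x + 1 then 1 else 0) = 1 := if_pos ⟨hx, hY'⟩
        have e2 : (if X a hk t = x ∧ Y a hk t = x - 1 then 1 else 0) = 0 :=
          if_neg (fun hc => by rw [hY'] at hc; omega)
        have e3 : (if a x (LT a hk t x + 1) = 1 then 1 else 0) = 1 := if_pos h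
        have e4 : (if a x (LT a hk t x + 1) = 1 then 0 else 1) = 0 := by rw [if_pos h]
        constructor <;> rw [hLT] <;> omega
      · have hY' : Y a hk t = x - 1 := by rw [hY, h]; ring
        have e1 : (if X a hk t = x ∧ Y a hk t = x + 1 then 1 else 0) = 0 :=
          if_neg (fun hc => by rw [hY'] at hc; omega)
        have e2 : (if X a hk t = x ∧ Y a hk t = x - 1 then 1 else 0) = 1 := if_pos ⟨hx, hY'⟩
        have e3 : (if a x (LT a hk t x + 1) = 1 then 1 else 0) = 0 := by
          rw [if_neg (by rw [h]; omega)]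
        have e4 : (if a x (LT a hk t x + 1) = 1 then 0 else 1) = 1 := by
          rw [if_neg (by rw [h]; omega)]
        constructor <;> rw [hLT] <;> omega
    · rw [if_neg (fun h => hx h.symm)] at hLT
      rw [if_neg (fun hc => hx hc.1)] at hRM
      rw [if_neg (fun hc => hx hc.1)] at hLM
      rw [hLT]
      constructor <;> omega

/-- If the walker never sits at `x` before `T`, there are no right moves from `x`. -/
lemma RM_eq_zero (x : ℤ) (T : ℕ) (hno : ∀ u, u < T → X a hk u ≠ x) :
    RM a hk x T = 0 := by
  rw [RM, Finset.card_eq_zero, Finset.filter_eq_empty_iff]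
  intro u hu
  rw [Finset.mem_range] at hu
  exact fun hc => hno u hu hc.1

end Consumed

section Step

lemma exists_step {f : ℕ → ℕ} (h0 : f 0 = 0)
    (hstep : ∀ t, f (t + 1) = f t ∨ f (t + 1) = f t + 1) {j T : ℕ}
    (hj : 1 ≤ j) (hT : j ≤ f T) :
    ∃ s, s < T ∧ f s = j - 1 ∧ f (s + 1) = j := by
  induction T with
  | zero => omega
  | succ T ih =>
    by_cases h : j ≤ f T
    · obtain ⟨s, hs1, hs2⟩ := ih h
      exact ⟨s, by omega, hs2⟩
    · rcases hstep T with h' | h' <;> exact ⟨T, by omega, by omega, by omega⟩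

end Step

end ZWAux
namespace ZWAux

lemma exists_lefts (a : Env) (hA : IsArrow a) (hnd : NonDeg a) (x : ℤ) (j : ℕ) :
    ∃ t, j ≤ leftsUpTo (a x) t := by
  induction j with
  | zero => exact ⟨0, Nat.zero_le _⟩
  | succ j ih =>
    obtain ⟨t, ht⟩ := ih
    obtain ⟨n, hn1, hn2⟩ := hnd x (t + 1)
    rcases hA x n with h1 | h1
    · refine ⟨n + 1, ?_⟩
      have hstep : leftsUpTo (a x) (n + 1) = leftsUpTo (a x) n + 1 := by
        rw [leftsUpTo_succ, if_neg (fun hc => hn2 (by rw [h1, hc]))]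
      have := leftsUpTo_mono (a x) (show t ≤ n by omega)
      omega
    · obtain ⟨n', rfl⟩ : ∃ n', n = n' + 1 := ⟨n - 1, by omega⟩
      refine ⟨n' + 1, ?_⟩
      have hstep : leftsUpTo (a x) (n' + 1) = leftsUpTo (a x) n' + 1 := by
        rw [leftsUpTo_succ, if_neg (by rw [h1]; omega)]
      have := leftsUpTo_mono (a x) (show t ≤ n' by omega)
      omega

lemma rights_le (c : ℕ → ℤ) {j m : ℕ} (hne : ∃ t, j ≤ leftsUpTo c t)
    (hm : leftsUpTo c m < j) : rightsUpTo c m ≤ rightsBeforeLefts j c := by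
  have ht₀ : j ≤ leftsUpTo c (sInf {t | j ≤ leftsUpTo c t}) := Nat.sInf_mem hne
  have hmt : m ≤ sInf {t | j ≤ leftsUpTo c t} := by
    by_contra h'
    push_neg at h'
    have := leftsUpTo_mono c (le_of_lt h')
    omega
  have h1 := rightsUpTo_mono c hmt
  have h2 := rights_add_lefts c (sInf {t | j ≤ leftsUpTo c t})
  rw [rightsBeforeLefts]
  omega

section Key

variable (a : Env) {k : ℕ} (hk : k ≠ 0)

/-- After the `j`-th left move from `x` at time `s`, if the walker never sits at `x`
again before `T`, then the rights from `x` up to `T` equal `rightsBeforeLefts j`. -/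
lemma SB (hA : IsArrow a) {x : ℤ} {j s T : ℕ} (hsT : s < T)
    (hXs : X a hk s = x) (hYs : Y a hk s = x - 1)
    (hLs : LM a hk x (s + 1) = j) (hj : 1 ≤ j)
    (hno : ∀ u, s < u → u < T → X a hk u ≠ x) :
    RM a hk x T = rightsBeforeLefts j (a x) := by
  have hstay : ∀ u, s + 1 ≤ u → u ≤ T → LT a hk u x = LT a hk (s + 1) x := by
    intro u hu1 hu2
    induction u with
    | zero => omega
    | succ u ihu =>
      by_cases h' : s + 1 = u + 1
      · rw [h']
      · have h1 : s + 1 ≤ u := by omega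
        rw [LT_succ, if_neg (fun h => hno u (by omega) (by omega) h.symm), ihu h1 (by omega)]
  have hm1 : LT a hk (s + 1) x = LT a hk s x + 1 := by
    rw [LT_succ, if_pos hXs.symm]
  have harr : a x (LT a hk (s + 1) x) = -1 := by
    have hY := Y_eq a hk s
    rw [hXs, hYs] at hY
    rw [hm1]
    omega
  have hLm : leftsUpTo (a x) (LT a hk (s + 1) x) = j := by
    rw [← (consumed a hk hA x (s + 1)).2, hLs]
  have hLm1 : leftsUpTo (a x) (LT a hk s x) + 1 = leftsUpTo (a x) (LT a hk (s + 1) x) := by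
    rw [hm1, leftsUpTo_succ, if_neg (by rw [← hm1, harr]; omega)]
  have hInf : sInf {t | j ≤ leftsUpTo (a x) t} = LT a hk (s + 1) x := by
    apply le_antisymm
    · exact Nat.sInf_le (by simp only [Set.mem_setOf_eq]; omega)
    · apply le_csInf ⟨LT a hk (s + 1) x, by simp only [Set.mem_setOf_eq]; omega⟩
      intro t ht
      simp only [Set.mem_setOf_eq] at ht
      by_contra hlt
      push_neg at hlt
      have hmono : leftsUpTo (a x) t ≤ leftsUpTo (a x) (LT a hk s x) :=
        leftsUpTo_mono _ (by omega)
      omega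
  have hpart := rights_add_lefts (a x) (LT a hk (s + 1) x)
  have hRT : RM a hk x T = rightsUpTo (a x) (LT a hk (s + 1) x) := by
    rw [(consumed a hk hA x T).1, hstay T (by omega) le_rfl]
  rw [hRT, rightsBeforeLefts, hInf]
  omega

end Key

end ZWAux
namespace ZWAux

section Sites

variable (a : Env) {k : ℕ} (hk : k ≠ 0)

lemma Cin_succ (n T : ℕ) : Cin a hk (n + 1) T = RM a hk (n : ℤ) T := by
  rw [Cin, if_neg (Nat.succ_ne_zero n)]
  have h1 : ((n + 1 : ℕ) : ℤ) - 1 = (n : ℤ) := by push_cast; ring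
  rw [h1]
  omega

lemma Cin_zero_eq (T : ℕ) : Cin a hk 0 T = RM a hk (-1) T + k := by
  rw [Cin, if_pos rfl]
  norm_num

/-- Finite case, rich site: the crossing numbers satisfy the `z` recursion. -/
lemma finite_site (hA : IsArrow a) {τ : ℕ} (hτ : X a hk τ = -1) (x : ℕ)
    (hC : k ≤ Cin a hk x τ) :
    RM a hk (x : ℤ) τ = rightsBeforeLefts (Cin a hk x τ - (k - 1)) (a (x : ℤ)) := by
  have hk1 : 1 ≤ k := Nat.one_le_iff_ne_zero.mpr hk
  have hB1 : 1 ≤ B a hk (x : ℤ) τ := one_le_B a hk _ τ (by rw [hτ]; omega)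
  have hf := flowU a hk hA x τ
  have hL1 : 1 ≤ LM a hk (x : ℤ) τ := by by_contra h'; push_neg at h'; omega
  have hBle := B_le_one a hk hA (x : ℤ) τ hL1
  have hLM : LM a hk (x : ℤ) τ = Cin a hk x τ - (k - 1) := by omega
  obtain ⟨s, hsτ, hs1, hs2⟩ :=
    exists_step (LM_zero a hk (x : ℤ)) (LM_step_or a hk (x : ℤ)) hL1 le_rfl
  have hcross : X a hk s = (x : ℤ) ∧ Y a hk s = (x : ℤ) - 1 := by
    by_contra hc
    rw [LM_succ, if_neg hc] at hs2
    omega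
  have hno : ∀ u, s < u → u < τ → X a hk u ≠ (x : ℤ) := by
    intro u hu1 hu2 hXu
    have hBu : B a hk (x : ℤ) u = 0 := B_eq_zero_of_X a hk _ u hXu
    obtain ⟨v, hv1, hv2, hv3, hv4⟩ :=
      exists_leftmove a hk hA (x : ℤ) (le_of_lt hu2) hBu hB1
    have h1 : LM a hk (x : ℤ) (s + 1) ≤ LM a hk (x : ℤ) v := LM_mono a hk _ (by omega)
    have h2 : LM a hk (x : ℤ) (v + 1) = LM a hk (x : ℤ) v + 1 := by
      rw [LM_succ, if_pos ⟨hv3, hv4⟩]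
    have h3 : LM a hk (x : ℤ) (v + 1) ≤ LM a hk (x : ℤ) τ := LM_mono a hk _ (by omega)
    omega
  rw [SB a hk hA hsτ hcross.1 hcross.2 hs2 hL1 hno, hLM]

/-- Finite case, poor site: no moves from `x` at all. -/
lemma finite_site_small (hA : IsArrow a) {τ : ℕ} (x : ℕ) (hC : Cin a hk x τ < k) :
    RM a hk (x : ℤ) τ = 0 := by
  apply RM_eq_zero
  intro u hu hXu
  have hBu := B_eq_zero_of_X a hk _ u hXu
  have hf := flowU a hk hA x u
  have := Cin_mono a hk x (le_of_lt hu)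
  omega

/-- Infinite case bound for a rich site. -/
lemma inf_site (hA : IsArrow a) (hnd : NonDeg a) (x : ℕ) {z : ℕ} (hzk : k ≤ z)
    (hCle : ∀ T, Cin a hk x T ≤ z) (T : ℕ) :
    RM a hk (x : ℤ) T ≤ rightsBeforeLefts (z - (k - 1)) (a (x : ℤ)) := by
  have hk1 : 1 ≤ k := Nat.one_le_iff_ne_zero.mpr hk
  have hj : 1 ≤ z - (k - 1) := by omega
  have hLMle : LM a hk (x : ℤ) T ≤ z - (k - 1) := by
    rcases budget a hk hA x T with h' | h'
    · omega
    · have := hCle T; omega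
  by_cases hcase : LM a hk (x : ℤ) T = z - (k - 1)
  · obtain ⟨s, hsT, hs1, hs2⟩ :=
      exists_step (LM_zero a hk (x : ℤ)) (LM_step_or a hk (x : ℤ)) hj (le_of_eq hcase.symm)
    have hcross : X a hk s = (x : ℤ) ∧ Y a hk s = (x : ℤ) - 1 := by
      by_contra hc
      rw [LM_succ, if_neg hc] at hs2
      omega
    have hno : ∀ u, s < u → u < T → X a hk u ≠ (x : ℤ) := by
      intro u hu1 hu2 hXu
      have hBu := B_eq_zero_of_X a hk _ u hXu
      have hf := flowU a hk hA x u
      have h1 : LM a hk (x : ℤ) (s + 1) ≤ LM a hk (x : ℤ) u := LM_mono a hk _ (by omega)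
      have := hCle u
      omega
    exact le_of_eq (SB a hk hA hsT hcross.1 hcross.2 hs2 hj hno)
  · have hcons := consumed a hk hA (x : ℤ) T
    rw [hcons.1]
    apply rights_le _ (exists_lefts a hA hnd (x : ℤ) _)
    rw [← hcons.2]
    omega

end Sites

end ZWAux
namespace ZWAux

section Wfun

variable (a : Env) {k : ℕ} (hk : k ≠ 0)

lemma wfun_zero : wfun a hk ((0 : ℕ) : ℤ) = (k : ℕ∞) := by
  rw [wfun, if_pos (by norm_num)]

/-- Finite case: `w (n+1)` equals the right moves from `n` before `τ`. -/
lemma wfun_succ_fin (hA : IsArrow a)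
    (h : ∃ t, minWalkPos a hk (fun _ => 0) t = -1) (n : ℕ) :
    wfun a hk ((n + 1 : ℕ) : ℤ) = (RM a hk (n : ℤ) (Nat.find h) : ℕ∞) := by
  set τ := Nat.find h with hτdef
  have hτ : X a hk τ = -1 := Nat.find_spec h
  have hbef : ∀ s, s < τ → X a hk s ≠ -1 := fun s hs => Nat.find_min h hs
  have hbh : ∀ t, beforeHit a hk t ↔ t < τ := by
    intro t
    constructor
    · intro hb
      by_contra h'
      exact hb τ (by omega) hτ
    · intro h' s hs
      exact hbef s (by omega)
  rw [wfun, if_neg (by push_cast; omega)]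
  have hfilter : ∀ T, ((Finset.range T).filter fun t => beforeHit a hk t ∧
      minWalkPos a hk (fun _ => 0) t = ((n + 1 : ℕ) : ℤ) - 1 ∧
      minMoveTo a hk (fun _ => 0) t ≠ ((n + 1 : ℕ) : ℤ) - 2) =
      (Finset.range (min T τ)).filter (fun t => X a hk t = (n : ℤ) ∧ Y a hk t = (n : ℤ) + 1) := by
    intro T
    ext t
    simp only [Finset.mem_filter, Finset.mem_range, lt_min_iff]
    constructor
    · rintro ⟨htT, hb, hX, hY⟩
      have h1 : t < τ := (hbh t).1 hb
      have hX' : X a hk t = (n : ℤ) := by rw [X, hX]; push_cast; ring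
      refine ⟨⟨htT, h1⟩, hX', ?_⟩
      rcases Y_pm a hk hA t with h' | h'
      · rw [h', hX']
      · exfalso
        apply hY
        show Y a hk t = _
        rw [h', hX']
        push_cast
        ring
    · rintro ⟨⟨htT, htτ⟩, hX, hY⟩
      refine ⟨htT, (hbh t).2 htτ, ?_, ?_⟩
      · show X a hk t = _
        rw [hX]; push_cast; ring
      · show Y a hk t ≠ _
        rw [hY]
        push_cast
        omega
  refine le_antisymm (iSup_le fun T => ?_) (le_trans ?_ (le_iSup _ τ))
  · rw [hfilter T]
    exact Nat.cast_le.mpr (RM_mono a hk _ (min_le_right T τ))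
  · rw [hfilter τ, min_self]
    exact le_of_eq rfl

/-- Infinite case: `w (n+1)` is bounded by any bound on the right moves from `n`. -/
lemma wfun_succ_inf_le (hA : IsArrow a)
    (h : ∀ t, minWalkPos a hk (fun _ => 0) t ≠ -1) {n z : ℕ}
    (hb : ∀ T, RM a hk (n : ℤ) T ≤ z) :
    wfun a hk ((n + 1 : ℕ) : ℤ) ≤ (z : ℕ∞) := by
  rw [wfun, if_neg (by push_cast; omega)]
  apply iSup_le
  intro T
  have hfilter : ((Finset.range T).filter fun t => beforeHit a hk t ∧
      minWalkPos a hk (fun _ => 0) t = ((n + 1 : ℕ) : ℤ) - 1 ∧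
      minMoveTo a hk (fun _ => 0) t ≠ ((n + 1 : ℕ) : ℤ) - 2) =
      (Finset.range T).filter (fun t => X a hk t = (n : ℤ) ∧ Y a hk t = (n : ℤ) + 1) := by
    ext t
    simp only [Finset.mem_filter, Finset.mem_range]
    constructor
    · rintro ⟨htT, _, hX, hY⟩
      have hX' : X a hk t = (n : ℤ) := by rw [X, hX]; push_cast; ring
      refine ⟨htT, hX', ?_⟩
      rcases Y_pm a hk hA t with h' | h'
      · rw [h', hX']
      · exfalso
        apply hY
        show Y a hk t = _
        rw [h', hX']
        push_cast
        ring
    · rintro ⟨htT, hX, hY⟩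
      refine ⟨htT, fun s _ => h s, ?_, ?_⟩
      · show X a hk t = _
        rw [hX]; push_cast; ring
      · show Y a hk t ≠ _
        rw [hY]
        push_cast
        omega
  rw [hfilter]
  exact Nat.cast_le.mpr (le_trans (le_of_eq rfl) (hb T))

end Wfun

end ZWAux
/-- Comparison of the backward process `z` with the crossing counts `w`:
if `t₋₁ < ∞` then `z_n = w_n` for all `n`, and if `t₋₁ = ∞` then `z_n ≥ w_n` for all `n`. -/
theorem zProc_eq_or_ge_wfun
    (a : Env) (hA : IsArrow a) (hnd : NonDeg a) {k : ℕ} (hk : k ≠ 0) :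
    ((∃ t, minWalkPos a hk (fun _ => 0) t = -1) →
      ∀ n : ℕ, (zProc a k n : ℕ∞) = wfun a hk (n : ℤ)) ∧
    ((∀ t, minWalkPos a hk (fun _ => 0) t ≠ -1) →
      ∀ n : ℕ, wfun a hk (n : ℤ) ≤ (zProc a k n : ℕ∞)) := by
  constructor
  · intro h
    set τ := Nat.find h with hτdef
    have hτ : ZWAux.X a hk τ = -1 := Nat.find_spec h
    have hbef : ∀ s, s < τ → ZWAux.X a hk s ≠ -1 := fun s hs => Nat.find_min h hs
    have hmain : ∀ n : ℕ, zProc a k n = ZWAux.Cin a hk n τ := by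
      intro n
      induction n with
      | zero =>
        rw [zProc, ZWAux.Cin_zero_eq]
        have h0 : ZWAux.RM a hk (-1) τ = 0 :=
          ZWAux.RM_eq_zero a hk _ τ (fun u hu => hbef u hu)
        omega
      | succ n ih =>
        rw [zProc, ZWAux.Cin_succ, ih]
        by_cases hc : k ≤ ZWAux.Cin a hk n τ
        · rw [if_pos hc]
          exact (ZWAux.finite_site a hk hA hτ n hc).symm
        · rw [if_neg hc]
          exact (ZWAux.finite_site_small a hk hA n (by omega)).symm
    intro n
    cases n with
    | zero =>
      rw [ZWAux.wfun_zero, hmain 0, ZWAux.Cin_zero_eq]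
      have h0 : ZWAux.RM a hk (-1) τ = 0 :=
        ZWAux.RM_eq_zero a hk _ τ (fun u hu => hbef u hu)
      rw [h0]
      norm_num
    | succ n =>
      rw [ZWAux.wfun_succ_fin a hk hA h n, hmain (n + 1), ZWAux.Cin_succ]
  · intro h
    have hmain : ∀ n : ℕ, ∀ T, ZWAux.Cin a hk n T ≤ zProc a k n := by
      intro n
      induction n with
      | zero =>
        intro T
        rw [zProc, ZWAux.Cin_zero_eq]
        have h0 : ZWAux.RM a hk (-1) T = 0 :=
          ZWAux.RM_eq_zero a hk _ T (fun u _ => h u)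
        omega
      | succ n ih =>
        intro T
        rw [zProc, ZWAux.Cin_succ]
        by_cases hc : k ≤ zProc a k n
        · rw [if_pos hc]
          exact ZWAux.inf_site a hk hA hnd n hc ih T
        · rw [if_neg hc]
          have h0 : ZWAux.RM a hk (n : ℤ) T = 0 := by
            apply ZWAux.RM_eq_zero
            intro u _ hXu
            have hBu := ZWAux.B_eq_zero_of_X a hk _ u hXu
            have hf := ZWAux.flowU a hk hA n u
            have := ih u
            omega
          omega
    intro n
    cases n with
    | zero =>
      rw [ZWAux.wfun_zero, zProc]
    | succ n =>
      apply ZWAux.wfun_succ_inf_le a hk hA h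
      intro T
      have := hmain (n + 1) T
      rw [ZWAux.Cin_succ] at this
      exact this

end
end

section
/- If the annealed measure on arrow environments is stationary ergodic with non-degenerate environments and ℙ_0(T_{-1} = ∞) > 0 for the k-minimum walk, then ℙ_0-almost surely the k-minimum walk has only finitely many right excursions, and in particular ℙ_0(X_n = 0 infinitely often) = 0. -/
open MeasureTheory Filter

noncomputable section

attribute [local instance 10] Classical.propDecidable

namespace FMRE

lemma minIdx_le {k : ℕ} (hk : k ≠ 0) (X : Fin k → ℤ) (i : Fin k) : X (minIdx hk X) ≤ X i := by
  have h : minIdx hk X ∈ Finset.univ.filter fun j => ∀ i, X j ≤ X i := Finset.min'_mem _ _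
  exact (Finset.mem_filter.mp h).2 i

lemma min'_congr {α} [LinearOrder α] {s t : Finset α} (h : s = t) (hs : s.Nonempty) :
    s.min' hs = t.min' (h ▸ hs) := by subst h; rfl

lemma minIdx_add {k : ℕ} (hk : k ≠ 0) (X : Fin k → ℤ) (c : ℤ) :
    minIdx hk (fun j => X j + c) = minIdx hk X := by
  have hset : (Finset.univ.filter fun j => ∀ i, (fun j => X j + c) j ≤ (fun j => X j + c) i)
      = (Finset.univ.filter fun j => ∀ i, X j ≤ X i) := by
    apply Finset.filter_congr
    intro j _
    simp only [eq_iff_iff]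
    constructor <;> intro h i <;> have := h i <;> omega
  exact min'_congr hset _

section Det

variable (a : Env) {k : ℕ} (hk : k ≠ 0)

local notation "ST" => minMobState a hk (fun _ => 0)
local notation "XW" => minWalkPos a hk (fun _ => 0)

lemma XW_def (t : ℕ) : XW t = (ST t).1 (minIdx hk (ST t).1) := rfl

lemma stateFst_succ (t : ℕ) : (ST (t+1)).1 =
    Function.update (ST t).1 (minIdx hk (ST t).1)
      (XW t + a (XW t) ((ST t).2 (XW t) + 1)) := by
  simp only [minMobState, XW_def, Function.update_self]

lemma stateSnd_succ (t : ℕ) : (ST (t+1)).2 =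
    Function.update (ST t).2 (XW t) ((ST t).2 (XW t) + 1) := by
  simp only [minMobState, XW_def]

lemma XW_zero : XW 0 = 0 := rfl

lemma XW_le (t : ℕ) (j : Fin k) : XW t ≤ (ST t).1 j := minIdx_le hk _ j

lemma mover_pos (t : ℕ) : (ST (t+1)).1 (minIdx hk (ST t).1) =
    XW t + a (XW t) ((ST t).2 (XW t) + 1) := by
  rw [stateFst_succ, Function.update_self]

lemma nonmover (t : ℕ) (j : Fin k) (hj : j ≠ minIdx hk (ST t).1) :
    (ST (t+1)).1 j = (ST t).1 j := by
  rw [stateFst_succ, Function.update_of_ne hj]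

lemma L_count (x : ℤ) (t : ℕ) : (ST t).2 x = Nat.count (fun s => XW s = x) t := by
  induction t with
  | zero => rfl
  | succ t ih =>
    rw [stateSnd_succ, Nat.count_succ, Function.update_apply]
    by_cases h : XW t = x
    · simp [h, ih]
    · simp [h, Ne.symm h, ih]

lemma X_succ_le (hArr : IsArrow a) (t : ℕ) : XW (t+1) ≤ XW t + 1 := by
  have h1 : XW (t+1) ≤ (ST (t+1)).1 (minIdx hk (ST t).1) := XW_le a hk (t+1) _
  rw [mover_pos] at h1
  rcases hArr (XW t) ((ST t).2 (XW t) + 1) with h|h <;> omega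

lemma X_succ_ge (hArr : IsArrow a) (t : ℕ) : XW t - 1 ≤ XW (t+1) := by
  have key : ∀ j, XW t - 1 ≤ (ST (t+1)).1 j := by
    intro j
    rcases eq_or_ne j (minIdx hk (ST t).1) with rfl|hj
    · rw [mover_pos]
      rcases hArr (XW t) ((ST t).2 (XW t) + 1) with h|h <;> omega
    · rw [nonmover a hk t j hj]
      have := XW_le a hk t j; omega
  exact key _

lemma events (hND : NonDeg a) (hArr : IsArrow a) (x : ℤ)
    (hx : {t | XW t = x}.Infinite) (N : ℕ) :
    ∃ t, N ≤ t ∧ XW t = x ∧ a x ((ST t).2 x + 1) = 1 := by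
  obtain ⟨n, hn, hne⟩ := hND x (N+1)
  have hone : ∃ i, N + 1 ≤ i ∧ a x i = 1 := by
    rcases hArr x n with h|h
    · exact ⟨n, hn, h⟩
    · rcases hArr x (n+1) with h2|h2
      · exact ⟨n+1, by omega, h2⟩
      · exact absurd (h.trans h2.symm) hne
  obtain ⟨i, hi, hone⟩ := hone
  have hxs : {s | (fun s => XW s = x) s}.Infinite := hx
  set t := Nat.nth (fun s => XW s = x) (i - 1) with ht
  have hpt : XW t = x := Nat.nth_mem_of_infinite hxs _
  have hcount : Nat.count (fun s => XW s = x) t = i - 1 :=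
    Nat.count_nth (fun hf => absurd hf hxs)
  have hL : (ST t).2 x = i - 1 := by rw [L_count]; exact hcount
  refine ⟨t, ?_, hpt, ?_⟩
  · have : i - 1 ≤ t := (Nat.nth_strictMono hxs).le_apply
    omega
  · rw [hL]
    have h2 : i - 1 + 1 = i := by omega
    rw [h2]; exact hone

lemma stuck (T₀ : ℕ) (x : ℤ) (hT : ∀ u, T₀ ≤ u → XW u ≠ x)
    (j : Fin k) (t : ℕ) (ht : T₀ ≤ t) (hx : (ST t).1 j = x) :
    ∀ u, t ≤ u → (ST u).1 j = x := by
  intro u hu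
  induction u, hu using Nat.le_induction with
  | base => exact hx
  | succ u hu ih =>
    have hj : j ≠ minIdx hk (ST u).1 := by
      intro he
      have : XW u = x := by rw [XW_def, ← he, ih]
      exact hT u (ht.trans hu) this
    rw [nonmover a hk u j hj]; exact ih

lemma visits_succ (hND : NonDeg a) (hArr : IsArrow a) (x : ℤ)
    (hx : {t | XW t = x}.Infinite) : {t | XW t = x + 1}.Infinite := by
  by_contra hfin
  rw [Set.not_infinite] at hfin
  obtain ⟨T₀, hT₀⟩ : ∃ T₀, ∀ u, T₀ ≤ u → XW u ≠ x + 1 := by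
    obtain ⟨B, hB⟩ := hfin.bddAbove
    exact ⟨B+1, fun u hu he => by have := hB he; omega⟩
  have P : ∀ n : ℕ, ∃ t, T₀ ≤ t ∧ ∃ F : Finset (Fin k),
      F.card = n ∧ ∀ j ∈ F, (ST t).1 j = x + 1 := by
    intro n
    induction n with
    | zero => exact ⟨T₀, le_rfl, ∅, rfl, by simp⟩
    | succ n ihn =>
      obtain ⟨t, ht, F, hFc, hF⟩ := ihn
      obtain ⟨t', ht', hxt', harr⟩ := events a hk hND hArr x hx t
      have hFt' : ∀ j ∈ F, (ST t').1 j = x + 1 :=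
        fun j hj => stuck a hk T₀ (x+1) hT₀ j t ht (hF j hj) t' ht'
      have hmov : (ST t').1 (minIdx hk (ST t').1) = x := hxt'
      have hj'F : minIdx hk (ST t').1 ∉ F := by
        intro h
        have := hFt' _ h
        rw [hmov] at this; omega
      have hnew : (ST (t'+1)).1 (minIdx hk (ST t').1) = x + 1 := by
        rw [mover_pos, hxt', harr]
      have hF' : ∀ j ∈ insert (minIdx hk (ST t').1) F, (ST (t'+1)).1 j = x + 1 := by
        intro j hj
        rcases Finset.mem_insert.mp hj with rfl|hj
        · exact hnew
        · exact stuck a hk T₀ (x+1) hT₀ j t ht (hF j hj) (t'+1) (by omega)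
      exact ⟨t'+1, by omega, insert (minIdx hk (ST t').1) F,
        by rw [Finset.card_insert_of_notMem hj'F, hFc], hF'⟩
  obtain ⟨t, -, F, hFc, -⟩ := P (k+1)
  have hle := Finset.card_le_univ F
  rw [hFc] at hle
  simp only [Finset.card_univ, Fintype.card_fin] at hle
  omega

end Det

lemma envShift_iterate (m : ℕ) (a : Env) (x : ℤ) (n : ℕ) :
    (envShift^[m] a) x n = a (x + m) n := by
  induction m generalizing a with
  | zero => simp
  | succ m ih =>
    rw [Function.iterate_succ_apply, ih]
    show a (x + m + 1) n = a (x + (m+1 : ℕ)) n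
    congr 1
    push_cast
    ring

section Main

variable (a : Env) {k : ℕ} (hk : k ≠ 0)

local notation "ST" => minMobState a hk (fun _ => 0)
local notation "XW" => minWalkPos a hk (fun _ => 0)

lemma main_det (hND : NonDeg a) (hArr : IsArrow a) (m : ℕ)
    (hA : ∀ t, minWalkPos (envShift^[m+1] a) hk (fun _ => 0) t ≠ -1) :
    {t | XW t = 0}.Finite := by
  by_contra hinf
  have hinf : {t | XW t = 0}.Infinite := hinf
  have levels : ∀ n : ℕ, {t | XW t = (n : ℤ)}.Infinite := by
    intro n
    induction n with
    | zero => simpa using hinf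
    | succ n ih =>
      have h2 := visits_succ a hk hND hArr (n : ℤ) ih
      have : ((n : ℤ) + 1) = ((n+1 : ℕ) : ℤ) := by push_cast; ring
      rwa [this] at h2
  set M : ℕ := m + 1 with hM
  have hex : ∃ t, XW t = (M : ℤ) := by
    obtain ⟨t, ht⟩ := (levels M).nonempty
    exact ⟨t, ht⟩
  have hτ : XW (Nat.find hex) = (M : ℤ) := Nat.find_spec hex
  set τ := Nat.find hex with hτdef
  have hbefore : ∀ s, s < τ → XW s < (M : ℤ) := by
    intro s
    induction s with
    | zero => intro _; rw [XW_zero]; omega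
    | succ s ih =>
      intro hlt
      have h1 := X_succ_le a hk hArr s
      have h2 : ¬ (XW (s+1) = (M : ℤ)) := Nat.find_min hex hlt
      have h3 := ih (by omega)
      omega
  have conf : ∀ t, (∀ s, s < t → XW s < (M:ℤ)) →
      (∀ j, (ST t).1 j ≤ (M:ℤ)) ∧ (∀ x : ℤ, (M:ℤ) ≤ x → (ST t).2 x = 0) := by
    intro t
    induction t with
    | zero =>
      intro _
      refine ⟨fun j => ?_, fun x hx => rfl⟩
      show (0 : ℤ) ≤ (M:ℤ); omega
    | succ t ih =>
      intro h
      have hXt : XW t < (M:ℤ) := h t (by omega)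
      obtain ⟨hp, hL⟩ := ih (fun s hs => h s (by omega))
      constructor
      · intro j
        rcases eq_or_ne j (minIdx hk (ST t).1) with rfl|hj
        · rw [mover_pos]
          rcases hArr (XW t) ((ST t).2 (XW t) + 1) with h1|h1 <;> omega
        · rw [nonmover a hk t j hj]; exact hp j
      · intro x hx
        rw [stateSnd_succ, Function.update_of_ne (by omega : x ≠ XW t)]
        exact hL x hx
  obtain ⟨hpos, hLz⟩ := conf τ hbefore
  have hallM : ∀ j, (ST τ).1 j = (M:ℤ) := by
    intro j
    have h1 := XW_le a hk τ j
    rw [hτ] at h1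
    have h2 := hpos j
    omega
  set b : Env := envShift^[M] a with hb
  have hbev : ∀ (x : ℤ) (n : ℕ), b x n = a (x + M) n := fun x n => envShift_iterate M a x n
  have hbArr : IsArrow b := fun x n => by rw [hbev]; exact hArr _ _
  have hA' : ∀ t, minWalkPos b hk (fun _ => 0) t ≠ -1 := hA
  have hX'ge : ∀ s, 0 ≤ minWalkPos b hk (fun _ => 0) s := by
    intro s
    induction s with
    | zero => exact le_of_eq rfl
    | succ s ih =>
      have h1 := X_succ_ge b hk hbArr s
      have h2 := hA' (s+1)
      omega
  have coup : ∀ s, (∀ j, (ST (τ + s)).1 j = (minMobState b hk (fun _ => 0) s).1 j + M) ∧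
      (∀ x : ℤ, (M:ℤ) ≤ x → (ST (τ+s)).2 x = (minMobState b hk (fun _ => 0) s).2 (x - M)) := by
    intro s
    induction s with
    | zero =>
      constructor
      · intro j
        rw [Nat.add_zero, hallM j]
        show (M:ℤ) = 0 + (M:ℤ); ring
      · intro x hx
        rw [Nat.add_zero, hLz x hx]; rfl
    | succ s ih =>
      obtain ⟨hP, hL2⟩ := ih
      have hfun : (ST (τ+s)).1 = fun j => (minMobState b hk (fun _ => 0) s).1 j + (M:ℤ) := funext hP
      have hidx : minIdx hk (ST (τ+s)).1 = minIdx hk (minMobState b hk (fun _ => 0) s).1 := by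
        rw [hfun]; exact minIdx_add hk _ _
      have hXs : XW (τ+s) = minWalkPos b hk (fun _ => 0) s + M := by
        rw [XW_def, hidx, hP]; rfl
      have hLX : (ST (τ+s)).2 (XW (τ+s)) =
          (minMobState b hk (fun _ => 0) s).2 (minWalkPos b hk (fun _ => 0) s) := by
        have e : minWalkPos b hk (fun _ => 0) s + (M:ℤ) - (M:ℤ) = minWalkPos b hk (fun _ => 0) s := by
          ring
        rw [hXs, hL2 (minWalkPos b hk (fun _ => 0) s + M) (by have := hX'ge s; omega), e]
      have harrow : a (XW (τ+s)) ((ST (τ+s)).2 (XW (τ+s)) + 1) =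
          b (minWalkPos b hk (fun _ => 0) s)
            ((minMobState b hk (fun _ => 0) s).2 (minWalkPos b hk (fun _ => 0) s) + 1) := by
        rw [hbev, hLX, hXs]
      constructor
      · intro j
        have e1 : τ + (s+1) = (τ+s) + 1 := rfl
        rw [e1, stateFst_succ, stateFst_succ, hidx]
        simp only [Function.update_apply]
        by_cases hj : j = minIdx hk (minMobState b hk (fun _ => 0) s).1
        · simp only [if_pos hj]
          rw [hXs]
          have harrow2 : a (minWalkPos b hk (fun _ => 0) s + M)
              ((minMobState a hk (fun _ => 0) (τ+s)).2 (minWalkPos b hk (fun _ => 0) s + M) + 1) =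
              b (minWalkPos b hk (fun _ => 0) s)
                ((minMobState b hk (fun _ => 0) s).2 (minWalkPos b hk (fun _ => 0) s) + 1) := by
            rw [← hXs]; exact harrow
          rw [harrow2]; ring
        · simp only [if_neg hj]
          exact hP j
      · intro x hx
        have e1 : τ + (s+1) = (τ+s) + 1 := rfl
        rw [e1, stateSnd_succ, stateSnd_succ]
        simp only [Function.update_apply]
        have hiff : (x = XW (τ+s)) ↔ (x - M = minWalkPos b hk (fun _ => 0) s) := by
          rw [hXs]; omega
        by_cases hcase : x = XW (τ+s)
        · rw [if_pos hcase, if_pos (hiff.mp hcase), hLX]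
        · rw [if_neg hcase, if_neg (fun h => hcase (hiff.mpr h)), hL2 x hx]
  obtain ⟨t, ht0, htgt⟩ := hinf.exists_gt τ
  have hXt : XW (τ + (t - τ)) = minWalkPos b hk (fun _ => 0) (t - τ) + M := by
    obtain ⟨hP, -⟩ := coup (t - τ)
    have hfun : (ST (τ+(t-τ))).1 = fun j => (minMobState b hk (fun _ => 0) (t-τ)).1 j + (M:ℤ) := funext hP
    rw [XW_def, hfun, minIdx_add hk _ _]; rfl
  have he : τ + (t - τ) = t := by omega
  rw [he] at hXt
  have h0 : XW t = 0 := ht0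
  have := hX'ge (t - τ)
  omega

end Main

section Meas

lemma msc_pi {k : ℕ} : MeasurableSingletonClass (Fin k → ℤ) := by
  constructor
  intro f
  have h : ({f} : Set (Fin k → ℤ)) = ⋂ j, (fun g : Fin k → ℤ => g j) ⁻¹' {f j} := by
    ext g
    simp [funext_iff, eq_comm]
  rw [h]
  exact MeasurableSet.iInter fun j => (measurable_pi_apply j) (measurableSet_singleton _)

lemma meas_eval {p : Env → ℤ} {q : Env → ℕ} (hp : Measurable p) (hq : Measurable q) :
    Measurable fun a : Env => a (p a) (q a) := by
  apply measurable_to_countable'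
  intro c
  have h : (fun a : Env => a (p a) (q a)) ⁻¹' {c} =
      ⋃ (x : ℤ) (n : ℕ), (p ⁻¹' {x} ∩ q ⁻¹' {n} ∩ {a : Env | a x n = c}) := by
    ext a
    simp only [Set.mem_preimage, Set.mem_singleton_iff, Set.mem_iUnion, Set.mem_inter_iff,
      Set.mem_setOf_eq]
    constructor
    · intro h; exact ⟨p a, q a, ⟨⟨rfl, rfl⟩, h⟩⟩
    · rintro ⟨x, n, ⟨hx, hn⟩, h⟩
      rw [hx, hn]; exact h
  rw [h]
  refine MeasurableSet.iUnion fun x => MeasurableSet.iUnion fun n => ?_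
  refine ((hp (measurableSet_singleton x)).inter (hq (measurableSet_singleton n))).inter ?_
  have hm : Measurable fun a : Env => a x n := (measurable_pi_apply n).comp (measurable_pi_apply x)
  exact hm (measurableSet_singleton c)

lemma meas_apply {β : Type*} [MeasurableSpace β] [MeasurableSingletonClass β] [Countable β]
    {F : Env → ℤ → β} (hF : ∀ x, Measurable fun a => F a x) {p : Env → ℤ}
    (hp : Measurable p) : Measurable fun a => F a (p a) := by
  apply measurable_to_countable'
  intro c
  have h : (fun a => F a (p a)) ⁻¹' {c} =
      ⋃ (x : ℤ), (p ⁻¹' {x} ∩ (fun a => F a x) ⁻¹' {c}) := by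
    ext a
    simp only [Set.mem_preimage, Set.mem_singleton_iff, Set.mem_iUnion, Set.mem_inter_iff]
    constructor
    · intro h; exact ⟨p a, rfl, h⟩
    · rintro ⟨x, hx, h⟩; rw [hx]; exact h
  rw [h]
  exact MeasurableSet.iUnion fun x =>
    (hp (measurableSet_singleton x)).inter ((hF x) (measurableSet_singleton c))

lemma meas_state {k : ℕ} (hk : k ≠ 0) (t : ℕ) :
    Measurable (fun a : Env => (minMobState a hk (fun _ => 0) t).1) ∧
    ∀ x : ℤ, Measurable fun a : Env => (minMobState a hk (fun _ => 0) t).2 x := by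
  haveI : MeasurableSingletonClass (Fin k → ℤ) := msc_pi
  induction t with
  | zero => exact ⟨measurable_const, fun x => measurable_const⟩
  | succ t ih =>
    obtain ⟨h1, h2⟩ := ih
    have hmin : Measurable fun a : Env => minIdx hk (minMobState a hk (fun _ => 0) t).1 := by
      have he : (fun a : Env => minIdx hk (minMobState a hk (fun _ => 0) t).1)
          = (minIdx hk) ∘ (fun a => (minMobState a hk (fun _ => 0) t).1) := rfl
      rw [he]
      exact (measurable_of_countable _).comp h1
    have hXW : Measurable fun a : Env => minWalkPos a hk (fun _ => 0) t := by
      have he : (fun a : Env => minWalkPos a hk (fun _ => 0) t)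
          = (fun v : Fin k → ℤ => v (minIdx hk v)) ∘ (fun a => (minMobState a hk (fun _ => 0) t).1) := rfl
      rw [he]
      exact (measurable_of_countable _).comp h1
    have hLp : Measurable fun a : Env =>
        (minMobState a hk (fun _ => 0) t).2 (minWalkPos a hk (fun _ => 0) t) :=
      meas_apply h2 hXW
    have harr : Measurable fun a : Env =>
        a (minWalkPos a hk (fun _ => 0) t)
          ((minMobState a hk (fun _ => 0) t).2 (minWalkPos a hk (fun _ => 0) t) + 1) :=
      meas_eval hXW ((measurable_of_countable _).comp hLp)
    have hval : Measurable fun a : Env => minWalkPos a hk (fun _ => 0) t +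
        a (minWalkPos a hk (fun _ => 0) t)
          ((minMobState a hk (fun _ => 0) t).2 (minWalkPos a hk (fun _ => 0) t) + 1) := by
      have he : (fun a : Env => minWalkPos a hk (fun _ => 0) t +
          a (minWalkPos a hk (fun _ => 0) t)
            ((minMobState a hk (fun _ => 0) t).2 (minWalkPos a hk (fun _ => 0) t) + 1))
          = (fun d : ℤ × ℤ => d.1 + d.2) ∘ (fun a => (minWalkPos a hk (fun _ => 0) t,
              a (minWalkPos a hk (fun _ => 0) t)
                ((minMobState a hk (fun _ => 0) t).2 (minWalkPos a hk (fun _ => 0) t) + 1))) := rfl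
      rw [he]
      exact (measurable_of_countable _).comp (hXW.prodMk harr)
    constructor
    · apply measurable_pi_lambda
      intro j
      have he : (fun a : Env => (minMobState a hk (fun _ => 0) (t+1)).1 j)
          = (fun d : (Fin k → ℤ) × (Fin k) × ℤ => Function.update d.1 d.2.1 d.2.2 j) ∘
            (fun a : Env => ((minMobState a hk (fun _ => 0) t).1,
              (minIdx hk (minMobState a hk (fun _ => 0) t).1,
               minWalkPos a hk (fun _ => 0) t +
                 a (minWalkPos a hk (fun _ => 0) t)
                   ((minMobState a hk (fun _ => 0) t).2 (minWalkPos a hk (fun _ => 0) t) + 1)))) := by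
        funext a
        exact congrFun (stateFst_succ a hk t) j
      rw [he]
      exact (measurable_of_countable _).comp (h1.prodMk (hmin.prodMk hval))
    · intro x
      have he : (fun a : Env => (minMobState a hk (fun _ => 0) (t+1)).2 x)
          = (fun d : ℤ × ℕ × ℕ => if x = d.1 then d.2.1 + 1 else d.2.2) ∘
            (fun a : Env => (minWalkPos a hk (fun _ => 0) t,
              ((minMobState a hk (fun _ => 0) t).2 (minWalkPos a hk (fun _ => 0) t),
               (minMobState a hk (fun _ => 0) t).2 x))) := by
        funext a
        rw [stateSnd_succ, Function.update_apply]
        rfl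
      rw [he]
      exact (measurable_of_countable _).comp (hXW.prodMk (hLp.prodMk (h2 x)))

lemma meas_minWalkPos {k : ℕ} (hk : k ≠ 0) (t : ℕ) :
    Measurable fun a : Env => minWalkPos a hk (fun _ => 0) t := by
  haveI : MeasurableSingletonClass (Fin k → ℤ) := msc_pi
  have he : (fun a : Env => minWalkPos a hk (fun _ => 0) t)
      = (fun v : Fin k → ℤ => v (minIdx hk v)) ∘ (fun a => (minMobState a hk (fun _ => 0) t).1) := rfl
  rw [he]
  exact (measurable_of_countable _).comp (meas_state hk t).1

lemma meas_envShift : Measurable envShift :=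
  measurable_pi_lambda _ fun x => measurable_pi_apply (x + 1)

end Meas

end FMRE

/-- If the annealed measure on arrow environments is stationary ergodic,
environments are a.s. non-degenerate, and `ℙ₀(T₋₁ = ∞) > 0` for the `k`-minimum walk, then
a.s. there are only finitely many right excursions, and in particular
`ℙ₀(X_n = 0 i.o.) = 0`. -/
theorem finitely_many_right_excursions
    (μ : Measure Env) [IsProbabilityMeasure μ]
    (hSE : Ergodic envShift μ)
    (hnd : ∀ᵐ a ∂μ, NonDeg a) (hA : ∀ᵐ a ∂μ, IsArrow a)
    {k : ℕ} (hk : k ≠ 0)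
    (h0 : 0 < μ {a | ∀ t, minWalkPos a hk (fun _ => 0) t ≠ -1}) :
    (∀ᵐ a ∂μ, {t : ℕ | minWalkPos a hk (fun _ => 0) t = 0 ∧
        minWalkPos a hk (fun _ => 0) (t + 1) = 1}.Finite) ∧
    μ {a | {t : ℕ | minWalkPos a hk (fun _ => 0) t = 0}.Infinite} = 0 := by
  classical
  set A : Set Env := {a | ∀ t, minWalkPos a hk (fun _ => 0) t ≠ -1} with hAdef
  have hAmeas : MeasurableSet A := by
    have h : A = ⋂ t : ℕ, (fun a : Env => minWalkPos a hk (fun _ => 0) t) ⁻¹' ({-1}ᶜ) := by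
      ext a; simp [hAdef]
    rw [h]
    exact MeasurableSet.iInter fun t =>
      (FMRE.meas_minWalkPos hk t) (measurableSet_singleton _).compl
  have hTmeas : Measurable envShift := FMRE.meas_envShift
  set E : Set Env := ⋃ m : ℕ, (envShift^[m]) ⁻¹' A with hEdef
  have hEmeas : MeasurableSet E :=
    MeasurableSet.iUnion fun m => (hTmeas.iterate m) hAmeas
  have hsub : envShift ⁻¹' E ⊆ E := by
    intro x hx
    have hx' : envShift x ∈ E := hx
    rw [hEdef, Set.mem_iUnion] at hx'
    obtain ⟨m, hm⟩ := hx'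
    rw [hEdef, Set.mem_iUnion]
    refine ⟨m + 1, ?_⟩
    show envShift^[m+1] x ∈ A
    rw [Function.iterate_succ_apply]
    exact hm
  have hmeq : μ (envShift ⁻¹' E) = μ E :=
    hSE.toMeasurePreserving.measure_preimage hEmeas.nullMeasurableSet
  have haeeq : envShift ⁻¹' E =ᵐ[μ] E :=
    MeasureTheory.ae_eq_of_subset_of_measure_ge hsub (le_of_eq hmeq.symm)
      (hTmeas hEmeas).nullMeasurableSet (measure_ne_top μ E)
  have hae : ∀ᵐ a ∂μ, ∃ m : ℕ, ∀ t, minWalkPos (envShift^[m+1] a) hk (fun _ => 0) t ≠ -1 := by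
    rcases hSE.quasiErgodic.ae_empty_or_univ₀ hEmeas.nullMeasurableSet haeeq with hE0 | hE1
    · exfalso
      have hAsub : A ⊆ E := fun x hx => Set.mem_iUnion.mpr ⟨0, hx⟩
      have hle : μ A ≤ μ E := measure_mono hAsub
      rw [measure_congr hE0] at hle
      simp at hle
      rw [hle] at h0
      exact lt_irrefl _ h0
    · have hE1' : μ E = 1 := by
        rw [measure_congr hE1]; simp
      have hE'1 : μ (envShift ⁻¹' E) = 1 := by rw [hmeq, hE1']
      have hc : μ ((envShift ⁻¹' E)ᶜ) = 0 := by
        rw [measure_compl (hTmeas hEmeas) (measure_ne_top _ _), hE'1]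
        simp
      have hmem : ∀ᵐ a ∂μ, a ∈ envShift ⁻¹' E := by
        rw [MeasureTheory.ae_iff]
        exact hc
      filter_upwards [hmem] with a ha
      have ha' : envShift a ∈ E := ha
      rw [hEdef, Set.mem_iUnion] at ha'
      obtain ⟨m, hm⟩ := ha'
      refine ⟨m, ?_⟩
      have h5 : envShift^[m+1] a ∈ A := by
        show envShift^[m+1] a ∈ A
        rw [Function.iterate_succ_apply]
        exact hm
      exact h5
  have key : ∀ᵐ a ∂μ, {t : ℕ | minWalkPos a hk (fun _ => 0) t = 0}.Finite := by
    filter_upwards [hnd, hA, hae] with a h1 h2 h3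
    obtain ⟨m, hm⟩ := h3
    exact FMRE.main_det a hk h1 h2 m hm
  constructor
  · filter_upwards [key] with a h
    exact h.subset fun t ht => ht.1
  · exact MeasureTheory.ae_iff.mp key


end
end

section
/- Let B_1, …, B_M be independent Bernoulli random variables with parameters p_1, …, p_M, followed by i.i.d. Bernoulli(1/2) variables B_i for i > M. Let G be the number of 1's appearing before the M-th 0 in the sequence B_1, B_2, …. Then E[G] = M + Σ_{i=1}^M (2p_i - 1). Symmetrically, the expected number of 0's before the M-th 1 equals M - Σ_{i=1}^M (2p_i - 1). -/
open MeasureTheory Filter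

noncomputable section

attribute [local instance 10] Classical.propDecidable

namespace StmtAux

def shiftk (k : ℕ) (c : ℕ → ℤ) : ℕ → ℤ := fun i => c (i + k)

def Good : Set (ℕ → ℤ) :=
  {c | (∀ i, 1 ≤ i → c i = 1 ∨ c i = -1) ∧ ∀ N, ∃ i, N ≤ i ∧ 1 ≤ i ∧ c i = -1}

lemma shiftk_shiftk (k l : ℕ) (c : ℕ → ℤ) : shiftk k (shiftk l c) = shiftk (k + l) c := by
  funext i; simp [shiftk, add_assoc]

lemma leftsUpTo_mono (c : ℕ → ℤ) : Monotone (leftsUpTo c) := by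
  intro s t hst
  exact Finset.card_le_card (Finset.filter_subset_filter _ (Finset.Icc_subset_Icc_right hst))

lemma leftsUpTo_le (c : ℕ → ℤ) (t : ℕ) : leftsUpTo c t ≤ t := by
  calc leftsUpTo c t ≤ (Finset.Icc 1 t).card := Finset.card_filter_le _ _
  _ = t := by rw [Nat.card_Icc]; omega

lemma leftsUpTo_zero (c : ℕ → ℤ) : leftsUpTo c 0 = 0 := by
  simp [leftsUpTo]

lemma leftsUpTo_succ (c : ℕ → ℤ) (t : ℕ) :
    leftsUpTo c (t+1) = leftsUpTo c t + (if c (t+1) = 1 then 0 else 1) := by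
  unfold leftsUpTo
  rw [show Finset.Icc 1 (t+1) = insert (t+1) (Finset.Icc 1 t) by
    ext i; simp [Finset.mem_Icc]; omega]
  rw [Finset.filter_insert]
  by_cases h : c (t+1) = 1 <;> simp [h, Finset.card_insert_of_notMem, Finset.mem_filter]

lemma leftsUpTo_succ_shift (c : ℕ → ℤ) (t : ℕ) :
    leftsUpTo c (t+1) = (if c 1 = 1 then 0 else 1) + leftsUpTo (shiftk 1 c) t := by
  unfold leftsUpTo
  have h2 : Finset.Icc 2 (t+1) = (Finset.Icc 1 t).image (· + 1) := by
    rw [Finset.image_add_right_Icc]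
  have h1 : Finset.Icc 1 (t+1) = insert 1 (Finset.Icc 2 (t+1)) := by
    ext i; simp [Finset.mem_Icc, Finset.mem_insert]; omega
  rw [h1, Finset.filter_insert]
  have hcard : ((Finset.Icc 2 (t+1)).filter fun i => c i ≠ 1).card
      = ((Finset.Icc 1 t).filter fun i => (shiftk 1 c) i ≠ 1).card := by
    rw [h2, Finset.filter_image, Finset.card_image_of_injective _ (add_left_injective 1)]
    rfl
  have hnm : (1:ℕ) ∉ Finset.Icc 2 (t+1) := by simp
  by_cases h : c 1 = 1
  · simp [h, hcard]
  · rw [if_pos h, if_neg h,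
      Finset.card_insert_of_notMem (fun hm => hnm (Finset.mem_filter.1 hm).1), hcard]
    omega

lemma leftsUpTo_succ_of_left (c : ℕ → ℤ) (i : ℕ) (hi : 1 ≤ i) (h : c i ≠ 1) :
    leftsUpTo c (i-1) + 1 = leftsUpTo c i := by
  obtain ⟨k, rfl⟩ := Nat.exists_eq_add_of_le hi
  have := leftsUpTo_succ c k
  rw [if_neg (by simpa [add_comm] using h)] at this
  simpa [add_comm] using this.symm

lemma exists_leftsUpTo_ge (c : ℕ → ℤ) (hc : ∀ N, ∃ i, N ≤ i ∧ 1 ≤ i ∧ c i = -1) (j : ℕ) :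
    ∃ t, j ≤ leftsUpTo c t := by
  induction j with
  | zero => exact ⟨0, Nat.zero_le _⟩
  | succ j ih =>
    obtain ⟨t, ht⟩ := ih
    obtain ⟨i, hti, hi1, hci⟩ := hc (t + 1)
    refine ⟨i, ?_⟩
    have h1 : leftsUpTo c t ≤ leftsUpTo c (i - 1) := leftsUpTo_mono c (by omega)
    have h2 := leftsUpTo_succ_of_left c i hi1 (by rw [hci]; decide)
    omega

end StmtAux

namespace StmtAux

def InfLefts (c : ℕ → ℤ) : Prop := ∀ N, ∃ i, N ≤ i ∧ 1 ≤ i ∧ c i = -1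

def TT (j : ℕ) (c : ℕ → ℤ) : ℕ := sInf {t | j ≤ leftsUpTo c t}

lemma rbl_eq (j : ℕ) (c : ℕ → ℤ) : rightsBeforeLefts j c = TT j c - j := rfl

lemma infLefts_shiftk (k : ℕ) (c : ℕ → ℤ) (hc : InfLefts c) : InfLefts (shiftk k c) := by
  intro N
  obtain ⟨i, hi1, hi2, hi3⟩ := hc (N + k + 1)
  refine ⟨i - k, by omega, by omega, ?_⟩
  show c (i - k + k) = -1
  rw [show i - k + k = i by omega]; exact hi3

lemma TT_nonempty (j : ℕ) (c : ℕ → ℤ) (hc : InfLefts c) : {t | j ≤ leftsUpTo c t}.Nonempty :=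
  exists_leftsUpTo_ge c hc j

lemma TT_mem (j : ℕ) (c : ℕ → ℤ) (hc : InfLefts c) : j ≤ leftsUpTo c (TT j c) :=
  Nat.sInf_mem (TT_nonempty j c hc)

lemma le_TT (j : ℕ) (c : ℕ → ℤ) (hc : InfLefts c) : j ≤ TT j c :=
  (TT_mem j c hc).trans (leftsUpTo_le c _)

lemma TT_right (j : ℕ) (c : ℕ → ℤ) (hc : InfLefts c) (hj : 1 ≤ j) (h1 : c 1 = 1) :
    TT j c = TT j (shiftk 1 c) + 1 := by
  set s := shiftk 1 c with hs
  have hcs : InfLefts s := infLefts_shiftk 1 c hc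
  have hu : j ≤ leftsUpTo s (TT j s) := TT_mem j s hcs
  have hshift : ∀ t, leftsUpTo c (t+1) = leftsUpTo s t := by
    intro t; rw [leftsUpTo_succ_shift, if_pos h1, zero_add]
  have hmem : (TT j s + 1) ∈ {t | j ≤ leftsUpTo c t} := by
    show j ≤ leftsUpTo c (TT j s + 1); rw [hshift]; exact hu
  have hle : TT j c ≤ TT j s + 1 := Nat.sInf_le hmem
  have hne : TT j c ≠ 0 := by
    intro h0
    have := TT_mem j c hc
    rw [h0, leftsUpTo_zero] at this; omega
  obtain ⟨v, hv⟩ := Nat.exists_eq_succ_of_ne_zero hne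
  have hvmem : j ≤ leftsUpTo s v := by
    rw [← hshift]
    have := TT_mem j c hc
    rwa [hv] at this
  have : TT j s ≤ v := Nat.sInf_le hvmem
  omega

lemma TT_left (j : ℕ) (c : ℕ → ℤ) (hc : InfLefts c) (h1 : c 1 ≠ 1) :
    TT (j+1) c = TT j (shiftk 1 c) + 1 := by
  set s := shiftk 1 c with hs
  have hcs : InfLefts s := infLefts_shiftk 1 c hc
  have hu : j ≤ leftsUpTo s (TT j s) := TT_mem j s hcs
  have hshift : ∀ t, leftsUpTo c (t+1) = 1 + leftsUpTo s t := by
    intro t; rw [leftsUpTo_succ_shift, if_neg h1]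
  have hmem : (TT j s + 1) ∈ {t | j+1 ≤ leftsUpTo c t} := by
    show j+1 ≤ leftsUpTo c (TT j s + 1); rw [hshift]; omega
  have hle : TT (j+1) c ≤ TT j s + 1 := Nat.sInf_le hmem
  have hne : TT (j+1) c ≠ 0 := by
    intro h0
    have := TT_mem (j+1) c hc
    rw [h0, leftsUpTo_zero] at this; omega
  obtain ⟨v, hv⟩ := Nat.exists_eq_succ_of_ne_zero hne
  have hvmem : j ≤ leftsUpTo s v := by
    have := TT_mem (j+1) c hc
    rw [hv, hshift] at this; omega
  have : TT j s ≤ v := Nat.sInf_le hvmem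
  omega

lemma rbl_right (j : ℕ) (c : ℕ → ℤ) (hc : InfLefts c) (hj : 1 ≤ j) (h1 : c 1 = 1) :
    rightsBeforeLefts j c = rightsBeforeLefts j (shiftk 1 c) + 1 := by
  have h := TT_right j c hc hj h1
  have h2 := le_TT j (shiftk 1 c) (infLefts_shiftk 1 c hc)
  rw [rbl_eq, rbl_eq, h]; omega

lemma rbl_left (j : ℕ) (c : ℕ → ℤ) (hc : InfLefts c) (h1 : c 1 ≠ 1) :
    rightsBeforeLefts (j+1) c = rightsBeforeLefts j (shiftk 1 c) := by
  have h := TT_left j c hc h1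
  have h2 := le_TT j (shiftk 1 c) (infLefts_shiftk 1 c hc)
  rw [rbl_eq, rbl_eq, h]; omega

lemma rbl_zero (c : ℕ → ℤ) : rightsBeforeLefts 0 c = 0 := by
  rw [rbl_eq]
  have : TT 0 c = 0 := by
    apply Nat.eq_zero_of_le_zero
    exact Nat.sInf_le (by simp)
  omega

/-- word lemma: if `c` starts with `n` rights then a left, then
`rightsBeforeLefts (j+1) c = n + rightsBeforeLefts j (shiftk (n+1) c)`. -/
lemma rbl_word (n j : ℕ) : ∀ (c : ℕ → ℤ), InfLefts c →
    (∀ i, 1 ≤ i → i ≤ n → c i = 1) → c (n+1) = -1 →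
    rightsBeforeLefts (j+1) c = n + rightsBeforeLefts j (shiftk (n+1) c) := by
  induction n with
  | zero =>
    intro c hc hw hl
    rw [rbl_left j c hc (by rw [hl]; decide)]
    simp
  | succ n ih =>
    intro c hc hw hl
    have h1 : c 1 = 1 := hw 1 le_rfl (by omega)
    rw [rbl_right (j+1) c hc (by omega) h1]
    have hs : InfLefts (shiftk 1 c) := infLefts_shiftk 1 c hc
    have := ih (shiftk 1 c) hs (fun i hi1 hi2 => hw (i+1) (by omega) (by omega)) hl
    rw [this, shiftk_shiftk]
    ring_nf

end StmtAux

namespace StmtAux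

lemma measurableSet_coord (i : ℕ) (v : ℤ) : MeasurableSet {c : ℕ → ℤ | c i = v} := by
  have : {c : ℕ → ℤ | c i = v} = (fun c : ℕ → ℤ => c i) ⁻¹' {v} := rfl
  rw [this]
  exact (measurable_pi_apply i) (measurableSet_singleton v)

lemma measurable_leftsUpTo (t : ℕ) : Measurable fun c : ℕ → ℤ => leftsUpTo c t := by
  induction t with
  | zero => simpa [leftsUpTo_zero] using measurable_const
  | succ t ih =>
    have : (fun c : ℕ → ℤ => leftsUpTo c (t+1))
        = fun c => leftsUpTo c t + (if c (t+1) = 1 then 0 else 1) := by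
      funext c; exact leftsUpTo_succ c t
    rw [this]
    exact ih.add (Measurable.ite (measurableSet_coord (t+1) 1) measurable_const measurable_const)

lemma measurable_rightsUpTo (t : ℕ) : Measurable fun c : ℕ → ℤ => rightsUpTo c t := by
  have h : ∀ c : ℕ → ℤ, rightsUpTo c t + leftsUpTo c t = t := by
    intro c
    unfold rightsUpTo leftsUpTo
    rw [Finset.card_filter_add_card_filter_not (p := fun i => c i = 1)]
    rw [Nat.card_Icc]; omega
  have : (fun c : ℕ → ℤ => rightsUpTo c t) = fun c => t - leftsUpTo c t := by
    funext c; have := h c; omega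
  rw [this]
  exact measurable_const.sub (measurable_leftsUpTo t)

lemma measurable_sInf_sub (cnt : (ℕ → ℤ) → ℕ → ℕ) (h : ∀ t, Measurable fun c => cnt c t)
    (j : ℕ) : Measurable fun c : ℕ → ℤ => sInf {t | j ≤ cnt c t} - j := by
  have hms : ∀ m, MeasurableSet {c : ℕ → ℤ | j ≤ cnt c m} := by
    intro m
    have : {c : ℕ → ℤ | j ≤ cnt c m} = (fun c => cnt c m) ⁻¹' (Set.Ici j) := rfl
    rw [this]
    exact (h m) MeasurableSpace.measurableSet_top
  have hm : Measurable fun c : ℕ → ℤ => sInf {t | j ≤ cnt c t} := by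
    apply measurable_to_countable'
    intro n
    have hset : (fun c : ℕ → ℤ => sInf {t | j ≤ cnt c t}) ⁻¹' {n} =
        ((⋂ m ∈ Set.Iio n, {c : ℕ → ℤ | j ≤ cnt c m}ᶜ) ∩
          ({c : ℕ → ℤ | j ≤ cnt c n} ∪ ({c : ℕ → ℤ | n = 0} ∩ ⋂ t, {c : ℕ → ℤ | j ≤ cnt c t}ᶜ))) := by
      ext c
      simp only [Set.mem_preimage, Set.mem_singleton_iff, Set.mem_inter_iff, Set.mem_iInter,
        Set.mem_union, Set.mem_setOf_eq, Set.mem_Iio, Set.mem_compl_iff]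
      constructor
      · intro hn
        constructor
        · intro m hmn hmem
          exact Nat.notMem_of_lt_sInf (lt_of_lt_of_eq hmn hn.symm) hmem
        · by_cases hne : ({t | j ≤ cnt c t} : Set ℕ).Nonempty
          · left; rw [← hn]; exact Nat.sInf_mem hne
          · right
            have he : ({t | j ≤ cnt c t} : Set ℕ) = ∅ := Set.not_nonempty_iff_eq_empty.1 hne
            refine ⟨?_, fun t ht => ?_⟩
            · rw [← hn, he, Nat.sInf_empty]
            · have : t ∈ ({t | j ≤ cnt c t} : Set ℕ) := ht
              rw [he] at this; exact this
      · rintro ⟨hlt, hn | ⟨h0, hall⟩⟩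
        · have h1 : sInf {t | j ≤ cnt c t} ≤ n := Nat.sInf_le hn
          rcases Nat.lt_or_ge (sInf {t | j ≤ cnt c t}) n with h2 | h2
          · exact absurd (Nat.sInf_mem (⟨n, hn⟩ : Set.Nonempty {t | j ≤ cnt c t})) (hlt _ h2)
          · omega
        · have he : ({t | j ≤ cnt c t} : Set ℕ) = ∅ :=
            Set.eq_empty_iff_forall_notMem.2 (fun t ht => hall t ht)
          rw [he, Nat.sInf_empty, h0]
    rw [hset]
    apply MeasurableSet.inter
    · exact MeasurableSet.biInter (Set.to_countable _) (fun m _ => (hms m).compl)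
    · apply MeasurableSet.union (hms n)
      apply MeasurableSet.inter
      · by_cases h0 : n = 0
        · simp [h0]
        · simp [h0]
      · exact MeasurableSet.iInter (fun t => (hms t).compl)
  exact hm.sub measurable_const

lemma measurable_rbl (j : ℕ) : Measurable fun c : ℕ → ℤ => rightsBeforeLefts j c :=
  measurable_sInf_sub (fun c t => leftsUpTo c t) measurable_leftsUpTo j

lemma measurable_lbr (j : ℕ) : Measurable fun c : ℕ → ℤ => leftsBeforeRights j c :=
  measurable_sInf_sub (fun c t => rightsUpTo c t) measurable_rightsUpTo j

/-! ### geometric series lemmas -/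

lemma tsum_half_pow_succ : ∑' n : ℕ, ((2:ENNReal)⁻¹) ^ (n + 1) = 1 := by
  have h1 : ∑' n : ℕ, ((2:ENNReal)⁻¹) ^ (n + 1) = 2⁻¹ * ∑' n : ℕ, ((2:ENNReal)⁻¹) ^ n := by
    rw [← ENNReal.tsum_mul_left]
    exact tsum_congr fun n => by rw [pow_succ, mul_comm]
  rw [h1, ENNReal.tsum_geometric, ENNReal.one_sub_inv_two, inv_inv]
  exact ENNReal.inv_mul_cancel two_ne_zero ENNReal.ofNat_ne_top

lemma tsum_aux_g (k : ℕ) : ∑' n : ℕ, (if k < n then ((2:ENNReal)⁻¹) ^ (n + 1) else 0)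
    = (2⁻¹) ^ (k + 1) := by
  induction k with
  | zero =>
    have h0 : ∑' n : ℕ, (if 0 < n then ((2:ENNReal)⁻¹) ^ (n + 1) else 0)
        = ∑' n : ℕ, 2⁻¹ * ((2:ENNReal)⁻¹) ^ (n + 1) := by
      rw [tsum_eq_zero_add' (ENNReal.summable : Summable fun n : ℕ => _)]
      have : (if (0:ℕ) < 0 then ((2:ENNReal)⁻¹) ^ (0 + 1) else 0) = 0 := if_neg (by omega)
      rw [this, zero_add]
      exact tsum_congr fun n => by
        rw [if_pos (by omega : 0 < n + 1), pow_succ, mul_comm]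
    rw [h0, ENNReal.tsum_mul_left, tsum_half_pow_succ, mul_one, pow_one]
  | succ k ih =>
    have h0 : ∑' n : ℕ, (if k + 1 < n then ((2:ENNReal)⁻¹) ^ (n + 1) else 0)
        = ∑' n : ℕ, 2⁻¹ * (if k < n then ((2:ENNReal)⁻¹) ^ (n + 1) else 0) := by
      rw [tsum_eq_zero_add' (ENNReal.summable : Summable fun n : ℕ => _)]
      have : (if k + 1 < 0 then ((2:ENNReal)⁻¹) ^ (0 + 1) else 0) = 0 := if_neg (by omega)
      rw [this, zero_add]
      refine tsum_congr fun n => ?_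
      by_cases h : k < n
      · rw [if_pos (by omega : k + 1 < n + 1), if_pos h, pow_succ, mul_comm]
      · rw [if_neg (by omega : ¬ k + 1 < n + 1), if_neg h, mul_zero]
    rw [h0, ENNReal.tsum_mul_left, ih]
    ring

lemma tsum_nat_mul_half_pow : ∑' n : ℕ, (n : ENNReal) * ((2:ENNReal)⁻¹) ^ (n + 1) = 1 := by
  have h1 : ∀ n : ℕ, (n : ENNReal) * ((2:ENNReal)⁻¹) ^ (n + 1)
      = ∑' k : ℕ, (if k < n then ((2:ENNReal)⁻¹) ^ (n + 1) else 0) := by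
    intro n
    rw [tsum_eq_sum (s := Finset.range n)
      (by intro k hk; rw [if_neg]; simpa using hk)]
    rw [Finset.sum_congr rfl (fun k hk => if_pos (Finset.mem_range.1 hk)),
      Finset.sum_const, Finset.card_range, nsmul_eq_mul]
  calc ∑' n : ℕ, (n : ENNReal) * ((2:ENNReal)⁻¹) ^ (n + 1)
      = ∑' n : ℕ, ∑' k : ℕ, (if k < n then ((2:ENNReal)⁻¹) ^ (n + 1) else 0) :=
        tsum_congr h1
    _ = ∑' k : ℕ, ∑' n : ℕ, (if k < n then ((2:ENNReal)⁻¹) ^ (n + 1) else 0) :=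
        ENNReal.tsum_comm
    _ = ∑' k : ℕ, ((2:ENNReal)⁻¹) ^ (k + 1) := tsum_congr tsum_aux_g
    _ = 1 := tsum_half_pow_succ

end StmtAux

namespace StmtAux

/-- Cylinder probabilities for indices `≥ 1` only. -/
def IIDFrom (μ : Measure (ℕ → ℤ)) (q : ℕ → ℝ) : Prop :=
  ∀ (F : Finset ℕ) (f : ℕ → ℤ), (∀ i ∈ F, 1 ≤ i) → (∀ i ∈ F, f i = 1 ∨ f i = -1) →
    μ {c : ℕ → ℤ | ∀ i ∈ F, c i = f i} =
      ENNReal.ofReal (∏ i ∈ F, if f i = 1 then q i else 1 - q i)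

lemma measurableSet_cyl (F : Finset ℕ) (f : ℕ → ℤ) :
    MeasurableSet {c : ℕ → ℤ | ∀ i ∈ F, c i = f i} := by
  have : {c : ℕ → ℤ | ∀ i ∈ F, c i = f i} = ⋂ i ∈ (F : Set ℕ), {c : ℕ → ℤ | c i = f i} := by
    ext c; simp
  rw [this]
  exact MeasurableSet.biInter (F : Set ℕ).to_countable (fun i _ => measurableSet_coord i (f i))

section Basic

variable {μ : Measure (ℕ → ℤ)} {q : ℕ → ℝ}

lemma coord_prob (hμ : IIDFrom μ q) (i : ℕ) (hi : 1 ≤ i) :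
    μ {c : ℕ → ℤ | c i = 1} = ENNReal.ofReal (q i)
    ∧ μ {c : ℕ → ℤ | c i = -1} = ENNReal.ofReal (1 - q i) := by
  constructor
  · have := hμ {i} (fun _ => 1) (by simpa using hi) (by simp)
    simpa using this
  · have := hμ {i} (fun _ => -1) (by simpa using hi) (by simp)
    simpa using this

lemma ae_pm [IsProbabilityMeasure μ] (hμ : IIDFrom μ q)
    (hq : ∀ i, 1 ≤ i → 0 ≤ q i ∧ q i ≤ 1) :
    ∀ᵐ c ∂μ, ∀ i, 1 ≤ i → c i = 1 ∨ c i = -1 := by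
  rw [ae_all_iff]
  intro i
  by_cases hi : 1 ≤ i
  · have h1 := (coord_prob hμ i hi).1
    have h2 := (coord_prob hμ i hi).2
    have hdisj : Disjoint {c : ℕ → ℤ | c i = 1} {c : ℕ → ℤ | c i = -1} := by
      rw [Set.disjoint_left]; intro c hc1 hc2
      simp only [Set.mem_setOf_eq] at hc1 hc2
      rw [hc1] at hc2; exact absurd hc2 (by decide)
    have hu : μ ({c : ℕ → ℤ | c i = 1} ∪ {c : ℕ → ℤ | c i = -1}) = 1 := by
      rw [measure_union hdisj (measurableSet_coord i (-1)), h1, h2,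
        ← ENNReal.ofReal_add (hq i hi).1 (by linarith [(hq i hi).2])]
      simp
    have hcompl : μ ({c : ℕ → ℤ | c i = 1} ∪ {c : ℕ → ℤ | c i = -1})ᶜ = 0 := by
      rw [measure_compl ((measurableSet_coord i 1).union (measurableSet_coord i (-1)))
        (measure_ne_top μ _), hu, measure_univ, tsub_self]
    rw [ae_iff]
    refine measure_mono_null ?_ hcompl
    intro c hc
    simp only [Set.mem_setOf_eq] at hc
    push_neg at hc
    intro hmem
    rcases hmem with h | h <;> exact absurd h (by tauto)
  · filter_upwards with c hc; exact absurd hc hi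

lemma ae_infLefts [IsProbabilityMeasure μ] (hμ : IIDFrom μ q)
    (hq : ∀ i, 1 ≤ i → 0 ≤ q i ∧ q i ≤ 1) (M : ℕ) (htail : ∀ i, M < i → q i = 1/2) :
    ∀ᵐ c ∂μ, InfLefts c := by
  -- the set of environments that are eventually all ones is null
  have hD : ∀ N : ℕ, μ {c : ℕ → ℤ | ∀ i, N < i → c i = 1} = 0 := by
    intro N
    set N' := max N M with hN'
    have hsub : ∀ m : ℕ, {c : ℕ → ℤ | ∀ i, N < i → c i = 1} ⊆
        {c : ℕ → ℤ | ∀ i ∈ Finset.Icc (N'+1) (N'+m), c i = (fun _ => 1 : ℕ → ℤ) i} := by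
      intro m c hc i hi
      simp only [Finset.mem_Icc] at hi
      exact hc i (by omega)
    have hval : ∀ m : ℕ, μ {c : ℕ → ℤ | ∀ i ∈ Finset.Icc (N'+1) (N'+m), c i = (fun _ => 1 : ℕ → ℤ) i}
        = ENNReal.ofReal ((1/2) ^ m) := by
      intro m
      rw [hμ (Finset.Icc (N'+1) (N'+m)) (fun _ => 1)
        (fun i hi => by simp only [Finset.mem_Icc] at hi; omega) (fun i _ => Or.inl rfl)]
      congr 1
      rw [Finset.prod_congr rfl (fun i hi => ?_), Finset.prod_const, Nat.card_Icc]
      · congr 1; omega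
      · simp only [Finset.mem_Icc] at hi
        rw [if_pos rfl, htail i (by omega)]
    have hle : ∀ m : ℕ, μ {c : ℕ → ℤ | ∀ i, N < i → c i = 1} ≤ (2⁻¹ : ENNReal) ^ m := by
      intro m
      calc μ {c : ℕ → ℤ | ∀ i, N < i → c i = 1}
          ≤ ENNReal.ofReal ((1/2) ^ m) := (hval m) ▸ measure_mono (hsub m)
        _ = (2⁻¹ : ENNReal) ^ m := by
            rw [ENNReal.ofReal_pow (by norm_num)]
            congr 1
            rw [show (1:ℝ)/2 = 2⁻¹ by norm_num, ENNReal.ofReal_inv_of_pos (by norm_num)]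
            norm_num
    have htend : Tendsto (fun m : ℕ => (2⁻¹ : ENNReal) ^ m) atTop (nhds 0) :=
      ENNReal.tendsto_pow_atTop_nhds_zero_of_lt_one
        (ENNReal.inv_lt_one.mpr ENNReal.one_lt_two)
    exact le_zero_iff.mp (ge_of_tendsto' htend hle)
  have hpm := ae_pm hμ hq
  have h2 := compl_mem_ae_iff.mpr (measure_iUnion_null (fun N => hD N))
  filter_upwards [hpm, h2] with c hc1 hc2
  intro N
  by_contra hcon
  push_neg at hcon
  apply hc2
  refine Set.mem_iUnion.mpr ⟨N, ?_⟩
  intro i hi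
  rcases hc1 i (by omega) with h | h
  · exact h
  · exact absurd h (hcon i (by omega) (by omega))

end Basic
end StmtAux

namespace StmtAux

lemma measurable_shiftk (k : ℕ) : Measurable (shiftk k) :=
  measurable_pi_lambda _ (fun i => measurable_pi_apply (i + k))

lemma lintegral_scaled (q : ℕ → ℝ) (G : (ℕ → ℤ) → ℕ)
    (target : ENNReal) (r : ENNReal) (hr : r ≠ ⊤)
    (ν : Measure (ℕ → ℤ)) (hu : ν Set.univ = r)
    (hcyl : ∀ (F : Finset ℕ) (f : ℕ → ℤ), (∀ i ∈ F, 1 ≤ i) → (∀ i ∈ F, f i = 1 ∨ f i = -1) →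
      ν {c | ∀ i ∈ F, c i = f i} = r * ENNReal.ofReal (∏ i ∈ F, if f i = 1 then q i else 1 - q i))
    (IH : ∀ (μ' : Measure (ℕ → ℤ)), IsProbabilityMeasure μ' → IIDFrom μ' q →
      ∫⁻ c, (G c : ENNReal) ∂μ' = target) :
    ∫⁻ c, (G c : ENNReal) ∂ν = r * target := by
  by_cases hr0 : r = 0
  · subst hr0
    have : ν = 0 := Measure.measure_univ_eq_zero.mp (by rw [hu])
    simp [this]
  · set μ' := r⁻¹ • ν with hμ'
    have hprob : IsProbabilityMeasure μ' := ⟨by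
      rw [hμ', Measure.smul_apply, smul_eq_mul, hu, ENNReal.inv_mul_cancel hr0 hr]⟩
    have hiid : IIDFrom μ' q := by
      intro F f h1 h2
      rw [hμ', Measure.smul_apply, smul_eq_mul, hcyl F f h1 h2, ← mul_assoc,
        ENNReal.inv_mul_cancel hr0 hr, one_mul]
    have hν : ν = r • μ' := by
      rw [hμ', smul_smul, ENNReal.mul_inv_cancel hr0 hr, one_smul]
    rw [hν, lintegral_smul_measure, IH μ' hprob hiid, smul_eq_mul]

lemma shift_restrict_univ (μ : Measure (ℕ → ℤ)) (q : ℕ → ℝ) (hμ : IIDFrom μ q)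
    (k : ℕ) (hk : 1 ≤ k) (w : ℕ → ℤ) (hw : ∀ i ∈ Finset.Icc 1 k, w i = 1 ∨ w i = -1) :
    ((μ.restrict {c | ∀ i ∈ Finset.Icc 1 k, c i = w i}).map (shiftk k)) Set.univ
      = ENNReal.ofReal (∏ i ∈ Finset.Icc 1 k, if w i = 1 then q i else 1 - q i) := by
  rw [Measure.map_apply (measurable_shiftk k) MeasurableSet.univ, Set.preimage_univ,
    Measure.restrict_apply_univ]
  exact hμ _ w (fun i hi => (Finset.mem_Icc.1 hi).1) hw

lemma shift_restrict_cyl (μ : Measure (ℕ → ℤ)) (q : ℕ → ℝ)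
    (hq01 : ∀ i, 1 ≤ i → 0 ≤ q i ∧ q i ≤ 1) (hμ : IIDFrom μ q)
    (k : ℕ) (hk : 1 ≤ k) (w : ℕ → ℤ) (hw : ∀ i ∈ Finset.Icc 1 k, w i = 1 ∨ w i = -1)
    (F : Finset ℕ) (f : ℕ → ℤ) (hF : ∀ i ∈ F, 1 ≤ i) (hf : ∀ i ∈ F, f i = 1 ∨ f i = -1) :
    ((μ.restrict {c | ∀ i ∈ Finset.Icc 1 k, c i = w i}).map (shiftk k)) {c | ∀ i ∈ F, c i = f i}
      = ENNReal.ofReal (∏ i ∈ Finset.Icc 1 k, if w i = 1 then q i else 1 - q i)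
        * ENNReal.ofReal (∏ i ∈ F, if f i = 1 then q (i + k) else 1 - q (i + k)) := by
  set g : ℕ → ℤ := fun i => if i ≤ k then w i else f (i - k) with hg
  rw [Measure.map_apply (measurable_shiftk k) (measurableSet_cyl F f),
    Measure.restrict_apply ((measurable_shiftk k) (measurableSet_cyl F f))]
  have hset : shiftk k ⁻¹' {c | ∀ i ∈ F, c i = f i} ∩ {c | ∀ i ∈ Finset.Icc 1 k, c i = w i}
      = {c | ∀ i ∈ Finset.Icc 1 k ∪ F.image (· + k), c i = g i} := by
    ext c
    simp only [Set.mem_inter_iff, Set.mem_preimage, Set.mem_setOf_eq, Finset.mem_union,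
      Finset.mem_image, Finset.mem_Icc]
    constructor
    · rintro ⟨hF', hw'⟩ i hi
      rcases hi with hi | ⟨a, ha, rfl⟩
      · rw [hg]; simp only [if_pos hi.2]; exact hw' i hi
      · have ha1 : 1 ≤ a := hF a ha
        rw [hg]
        simp only [if_neg (by omega : ¬ a + k ≤ k)]
        rw [show a + k - k = a by omega]
        exact hF' a ha
    · intro hall
      constructor
      · intro a ha
        have := hall (a + k) (Or.inr ⟨a, ha, rfl⟩)
        have ha1 : 1 ≤ a := hF a ha
        rw [hg] at this
        simp only [if_neg (by omega : ¬ a + k ≤ k)] at this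
        rwa [show a + k - k = a by omega] at this
      · intro i hi
        have hi' := hi
        have := hall i (Or.inl hi')
        rw [hg] at this
        simpa only [if_pos hi'.2] using this
  rw [hset]
  have hdisj : Disjoint (Finset.Icc 1 k) (F.image (· + k)) := by
    rw [Finset.disjoint_left]
    intro i hi hmem
    obtain ⟨a, ha, rfl⟩ := Finset.mem_image.1 hmem
    have := hF a ha
    have := (Finset.mem_Icc.1 hi).2
    omega
  rw [hμ (Finset.Icc 1 k ∪ F.image (· + k)) g
    (by
      intro i hi
      rcases Finset.mem_union.1 hi with hi | hi
      · exact (Finset.mem_Icc.1 hi).1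
      · obtain ⟨a, ha, rfl⟩ := Finset.mem_image.1 hi; have := hF a ha; omega)
    (by
      intro i hi
      rcases Finset.mem_union.1 hi with hi | hi
      · rw [hg]; simp only [if_pos (Finset.mem_Icc.1 hi).2]; exact hw i hi
      · obtain ⟨a, ha, rfl⟩ := Finset.mem_image.1 hi
        have ha1 := hF a ha
        rw [hg]; simp only [if_neg (by omega : ¬ a + k ≤ k)]
        rw [show a + k - k = a by omega]
        exact hf a ha)]
  rw [Finset.prod_union hdisj]
  have h1 : ∏ i ∈ Finset.Icc 1 k, (if g i = 1 then q i else 1 - q i)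
      = ∏ i ∈ Finset.Icc 1 k, (if w i = 1 then q i else 1 - q i) := by
    refine Finset.prod_congr rfl (fun i hi => ?_)
    rw [hg]; simp only [if_pos (Finset.mem_Icc.1 hi).2]
  have h2 : ∏ i ∈ F.image (· + k), (if g i = 1 then q i else 1 - q i)
      = ∏ i ∈ F, (if f i = 1 then q (i + k) else 1 - q (i + k)) := by
    rw [Finset.prod_image (by intro a _ b _ h; simp only at h; omega)]
    refine Finset.prod_congr rfl (fun a ha => ?_)
    have ha1 := hF a ha
    rw [hg]; simp only [if_neg (by omega : ¬ a + k ≤ k)]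
    rw [show a + k - k = a by omega]
  rw [h1, h2, ENNReal.ofReal_mul]
  refine Finset.prod_nonneg (fun i hi => ?_)
  have := hq01 i (Finset.mem_Icc.1 hi).1
  by_cases h : w i = 1 <;> simp [h] <;> linarith [this.1, this.2]

end StmtAux

namespace StmtAux

lemma ofReal_half_pow (m : ℕ) : ENNReal.ofReal ((1/2 : ℝ) ^ m) = (2⁻¹ : ENNReal) ^ m := by
  rw [ENNReal.ofReal_pow (by norm_num)]
  congr 1
  rw [show (1:ℝ)/2 = 2⁻¹ by norm_num, ENNReal.ofReal_inv_of_pos (by norm_num)]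
  norm_num

lemma qOf_zero (p : ℕ → ℝ) (i : ℕ) : qOf 0 p i = 1/2 := by
  unfold qOf; rw [if_neg (by omega)]

lemma qOf_bounds {M : ℕ} {p : ℕ → ℝ} (hp : ∀ i, 1 ≤ i → i ≤ M → 0 ≤ p i ∧ p i ≤ 1) :
    ∀ i, 1 ≤ i → 0 ≤ qOf M p i ∧ qOf M p i ≤ 1 := by
  intro i hi
  unfold qOf
  by_cases h : 1 ≤ i ∧ i ≤ M
  · rw [if_pos h]; exact hp i h.1 h.2
  · rw [if_neg h]; norm_num

lemma qOf_tail (M : ℕ) (p : ℕ → ℝ) : ∀ i, M < i → qOf M p i = 1/2 := by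
  intro i hi; unfold qOf; rw [if_neg (by omega)]

lemma measurable_rbl_coe (j : ℕ) :
    Measurable fun c : ℕ → ℤ => ((rightsBeforeLefts j c : ℕ) : ENNReal) :=
  measurable_from_top.comp (measurable_rbl j)

lemma fair_prod (p : ℕ → ℝ) (w : ℕ → ℤ) (k : ℕ) :
    ∏ i ∈ Finset.Icc 1 k, (if w i = 1 then qOf 0 p i else 1 - qOf 0 p i) = (1/2 : ℝ) ^ k := by
  have h : ∀ i ∈ Finset.Icc 1 k, (if w i = 1 then qOf 0 p i else 1 - qOf 0 p i) = (1/2 : ℝ) := by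
    intro i _; rw [qOf_zero]; split <;> norm_num
  rw [Finset.prod_congr rfl h, Finset.prod_const, Nat.card_Icc]
  simp

lemma fair_case (p : ℕ → ℝ) (j : ℕ) :
    ∀ (μ : Measure (ℕ → ℤ)), IsProbabilityMeasure μ → IIDFrom μ (qOf 0 p) →
      ∫⁻ c, ((rightsBeforeLefts j c : ℕ) : ENNReal) ∂μ = (j : ENNReal) := by
  induction j with
  | zero =>
    intro μ hprob hμ
    have : (fun c : ℕ → ℤ => ((rightsBeforeLefts 0 c : ℕ) : ENNReal)) = fun _ => 0 := by
      funext c; rw [rbl_zero]; simp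
    rw [this, lintegral_zero]; simp
  | succ j ih =>
    intro μ hprob hμ
    have hq01 := qOf_bounds (M := 0) (p := p) (by intro i h1 h2; omega)
    have hpm := ae_pm hμ hq01
    have hinf := ae_infLefts hμ hq01 0 (qOf_tail 0 p)
    set w : ℕ → ℕ → ℤ := fun n i => if i = n + 1 then -1 else 1 with hw
    set E : ℕ → Set (ℕ → ℤ) := fun n => {c | ∀ i ∈ Finset.Icc 1 (n+1), c i = w n i} with hE
    have hwpm : ∀ n, ∀ i ∈ Finset.Icc 1 (n+1), w n i = 1 ∨ w n i = -1 := by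
      intro n i _
      by_cases h : i = n + 1
      · right; simp [hw, h]
      · left; simp [hw, h]
    have hEmeas : ∀ n, MeasurableSet (E n) := fun n => measurableSet_cyl _ _
    have hdisj : Pairwise (Function.onFun Disjoint E) := by
      have aux : ∀ m n, m < n → ∀ c : ℕ → ℤ, c ∈ E m → c ∈ E n → False := by
        intro m n hmn c hcm hcn
        have h1 : c (m+1) = -1 := by
          have := hcm (m+1) (Finset.mem_Icc.2 ⟨by omega, by omega⟩)
          simpa [hw] using this
        have h2 : c (m+1) = 1 := by
          have := hcn (m+1) (Finset.mem_Icc.2 ⟨by omega, by omega⟩)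
          simp only [hw] at this
          rwa [if_neg (by omega : ¬ m + 1 = n + 1)] at this
        rw [h1] at h2; exact absurd h2 (by decide)
      intro m n hmn
      rcases Nat.lt_or_ge m n with h | h
      · exact Set.disjoint_left.2 (fun c hcm hcn => aux m n h c hcm hcn)
      · have : n < m := by omega
        exact Set.disjoint_right.2 (fun c hcm hcn => aux n m this c hcm hcn)
    have hcover : ∀ᵐ c ∂μ, c ∈ ⋃ n, E n := by
      filter_upwards [hpm, hinf] with c h1 h2
      have hne : {i | 1 ≤ i ∧ c i = -1}.Nonempty := by
        obtain ⟨i, _, hi2, hi3⟩ := h2 0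
        exact ⟨i, hi2, hi3⟩
      set i₀ := sInf {i | 1 ≤ i ∧ c i = -1} with hi₀
      have hmem : 1 ≤ i₀ ∧ c i₀ = -1 := Nat.sInf_mem hne
      refine Set.mem_iUnion.2 ⟨i₀ - 1, ?_⟩
      intro i hi
      have hi' := Finset.mem_Icc.1 hi
      have hi0 : i₀ - 1 + 1 = i₀ := by omega
      by_cases hieq : i = i₀ - 1 + 1
      · simp only [hw]
        rw [if_pos hieq, hieq, hi0]; exact hmem.2
      · have hilt : i < i₀ := by omega
        have hnm : ¬ (1 ≤ i ∧ c i = -1) := Nat.notMem_of_lt_sInf (by rw [← hi₀]; exact hilt)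
        have hci : c i ≠ -1 := fun hc => hnm ⟨hi'.1, hc⟩
        rcases h1 i hi'.1 with h | h
        · simp only [hw]
          rw [if_neg hieq]; exact h
        · exact absurd h hci
    have hres : ∫⁻ c, ((rightsBeforeLefts (j+1) c : ℕ) : ENNReal) ∂μ
        = ∑' n, ∫⁻ c in E n, ((rightsBeforeLefts (j+1) c : ℕ) : ENNReal) ∂μ := by
      have hst : (Set.univ : Set (ℕ → ℤ)) =ᵐ[μ] ⋃ n, E n := by
        rw [Filter.eventuallyEq_set]
        filter_upwards [hcover] with c hc
        simp [hc]
      conv_lhs => rw [← Measure.restrict_univ (μ := μ)]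
      rw [Measure.restrict_congr_set hst]
      exact lintegral_iUnion hEmeas hdisj _
    have hterm : ∀ n : ℕ, ∫⁻ c in E n, ((rightsBeforeLefts (j+1) c : ℕ) : ENNReal) ∂μ
        = (n : ENNReal) * (2⁻¹ : ENNReal) ^ (n+1) + (2⁻¹ : ENNReal) ^ (n+1) * (j : ENNReal) := by
      intro n
      have hae : (fun c : ℕ → ℤ => ((rightsBeforeLefts (j+1) c : ℕ) : ENNReal))
          =ᵐ[μ.restrict (E n)]
          (fun c => (n : ENNReal) + ((rightsBeforeLefts j (shiftk (n+1) c) : ℕ) : ENNReal)) := by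
        rw [Filter.EventuallyEq, ae_restrict_iff' (hEmeas n)]
        filter_upwards [hpm, hinf] with c h1 h2 hcE
        have hw1 : ∀ i, 1 ≤ i → i ≤ n → c i = 1 := by
          intro i ha hb
          have := hcE i (Finset.mem_Icc.2 ⟨ha, by omega⟩)
          simp only [hw] at this
          rwa [if_neg (by omega : ¬ i = n + 1)] at this
        have hl : c (n+1) = -1 := by
          have := hcE (n+1) (Finset.mem_Icc.2 ⟨by omega, le_rfl⟩)
          simpa [hw] using this
        rw [rbl_word n j c h2 hw1 hl]
        push_cast; ring
      rw [lintegral_congr_ae hae,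
        lintegral_add_left measurable_const, setLIntegral_const]
      have hmuE : μ (E n) = (2⁻¹ : ENNReal) ^ (n+1) := by
        rw [hE]
        rw [hμ _ (w n) (fun i hi => (Finset.mem_Icc.1 hi).1) (hwpm n),
          fair_prod, ofReal_half_pow]
      have hmap : ∫⁻ c in E n, ((rightsBeforeLefts j (shiftk (n+1) c) : ℕ) : ENNReal) ∂μ
          = (2⁻¹ : ENNReal) ^ (n+1) * (j : ENNReal) := by
        rw [← lintegral_map (measurable_rbl_coe j) (measurable_shiftk (n+1))]
        refine lintegral_scaled (qOf 0 p) (rightsBeforeLefts j) (j : ENNReal)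
          ((2⁻¹ : ENNReal) ^ (n+1)) (by
            exact ENNReal.pow_ne_top (by simp)) _ ?_ ?_ (fun μ' h1 h2 => ih μ' h1 h2)
        · rw [shift_restrict_univ μ (qOf 0 p) hμ (n+1) (by omega) (w n) (hwpm n),
            fair_prod, ofReal_half_pow]
        · intro F f hF hf
          rw [shift_restrict_cyl μ (qOf 0 p) hq01 hμ (n+1) (by omega) (w n) (hwpm n) F f hF hf,
            fair_prod, ofReal_half_pow]
          congr 1
          refine congrArg ENNReal.ofReal (Finset.prod_congr rfl (fun i hi => ?_))
          rw [qOf_zero, qOf_zero]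
      rw [hmap, hmuE]
    rw [hres]
    rw [tsum_congr hterm, ENNReal.tsum_add, tsum_nat_mul_half_pow,
      ENNReal.tsum_mul_right, tsum_half_pow_succ, one_mul]
    rw [Nat.cast_succ, add_comm]

end StmtAux

namespace StmtAux

lemma driftSum_zero (p : ℕ → ℝ) : driftSum 0 p = 0 := by simp [driftSum]

lemma driftSum_succ (M : ℕ) (p : ℕ → ℝ) :
    driftSum (M+1) p = (2 * p 1 - 1) + driftSum M (fun i => p (i+1)) := by
  unfold driftSum
  have h : Finset.Icc 2 (M+1) = (Finset.Icc 1 M).image (· + 1) := by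
    rw [Finset.image_add_right_Icc]
  rw [show Finset.Icc 1 (M+1) = insert 1 (Finset.Icc 2 (M+1)) by
    ext i; simp [Finset.mem_Icc]; omega]
  rw [Finset.sum_insert (by simp), h, Finset.sum_image (by intro a _ b _ hab; simp only at hab; omega)]

lemma driftSum_bounds (M : ℕ) (p : ℕ → ℝ) (hp : ∀ i, 1 ≤ i → i ≤ M → 0 ≤ p i ∧ p i ≤ 1) :
    -(M:ℝ) ≤ driftSum M p ∧ driftSum M p ≤ M := by
  have h1 : ∑ i ∈ Finset.Icc 1 M, (-1 : ℝ) ≤ driftSum M p := by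
    apply Finset.sum_le_sum; intro i hi
    have := hp i (Finset.mem_Icc.1 hi).1 (Finset.mem_Icc.1 hi).2
    linarith [this.1]
  have h2 : driftSum M p ≤ ∑ i ∈ Finset.Icc 1 M, (1 : ℝ) := by
    apply Finset.sum_le_sum; intro i hi
    have := hp i (Finset.mem_Icc.1 hi).1 (Finset.mem_Icc.1 hi).2
    linarith [this.2]
  rw [Finset.sum_const, Nat.card_Icc] at h1 h2
  simp only [Nat.add_sub_cancel, nsmul_eq_mul] at h1 h2
  constructor <;> linarith

lemma qOf_shift (M : ℕ) (p : ℕ → ℝ) (i : ℕ) (hi : 1 ≤ i) :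
    qOf (M+1) p (i+1) = qOf M (fun i => p (i+1)) i := by
  unfold qOf
  by_cases h : i ≤ M
  · rw [if_pos (by omega), if_pos (by omega)]
  · rw [if_neg (by omega), if_neg (by omega)]

lemma key (M : ℕ) : ∀ (p : ℕ → ℝ), (∀ i, 1 ≤ i → i ≤ M → 0 ≤ p i ∧ p i ≤ 1) →
    ∀ j, M ≤ j → ∀ (μ : Measure (ℕ → ℤ)), IsProbabilityMeasure μ → IIDFrom μ (qOf M p) →
    ∫⁻ c, ((rightsBeforeLefts j c : ℕ) : ENNReal) ∂μ
      = ENNReal.ofReal ((j : ℝ) + driftSum M p) := by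
  induction M with
  | zero =>
    intro p hp j hj μ hprob hμ
    rw [driftSum_zero, add_zero, ENNReal.ofReal_natCast]
    exact fair_case p j μ hprob hμ
  | succ M ih =>
    intro p hp j hj μ hprob hμ
    set p' : ℕ → ℝ := fun i => p (i+1) with hp'def
    have hp' : ∀ i, 1 ≤ i → i ≤ M → 0 ≤ p' i ∧ p' i ≤ 1 :=
      fun i h1 h2 => hp (i+1) (by omega) (by omega)
    obtain ⟨j', rfl⟩ : ∃ j', j = j' + 1 := ⟨j - 1, by omega⟩
    have hMj' : M ≤ j' := by omega
    have hq01 := qOf_bounds hp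
    have hpm := ae_pm hμ hq01
    have hinf := ae_infLefts hμ hq01 (M+1) (qOf_tail (M+1) p)
    have hp1 : 0 ≤ p 1 ∧ p 1 ≤ 1 := hp 1 le_rfl (by omega)
    have hδ := driftSum_bounds M p' hp'
    set w1 : ℕ → ℤ := fun _ => 1 with hw1
    set w2 : ℕ → ℤ := fun _ => -1 with hw2
    set A1 : Set (ℕ → ℤ) := {c : ℕ → ℤ | ∀ i ∈ Finset.Icc 1 1, c i = w1 i} with hA1
    set A2 : Set (ℕ → ℤ) := {c : ℕ → ℤ | ∀ i ∈ Finset.Icc 1 1, c i = w2 i} with hA2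
    have hA1meas : MeasurableSet A1 := measurableSet_cyl _ _
    have hA2meas : MeasurableSet A2 := measurableSet_cyl _ _
    have hA1mem : ∀ c : ℕ → ℤ, c ∈ A1 ↔ c 1 = 1 := by
      intro c
      constructor
      · intro h; exact h 1 (by simp)
      · intro h i hi
        have := Finset.mem_Icc.1 hi
        rw [show i = 1 by omega]; exact h
    have hA2mem : ∀ c : ℕ → ℤ, c ∈ A2 ↔ c 1 = -1 := by
      intro c
      constructor
      · intro h; exact h 1 (by simp)
      · intro h i hi
        have := Finset.mem_Icc.1 hi
        rw [show i = 1 by omega]; exact h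
    have hdisj : Disjoint A1 A2 := by
      rw [Set.disjoint_left]
      intro c h1 h2
      rw [hA1mem] at h1; rw [hA2mem] at h2
      rw [h1] at h2; exact absurd h2 (by decide)
    have hcover : ∀ᵐ c ∂μ, c ∈ A1 ∪ A2 := by
      filter_upwards [hpm] with c h1
      rcases h1 1 le_rfl with h | h
      · exact Or.inl ((hA1mem c).2 h)
      · exact Or.inr ((hA2mem c).2 h)
    have hsplit : ∫⁻ c, ((rightsBeforeLefts (j'+1) c : ℕ) : ENNReal) ∂μ
        = ∫⁻ c in A1, ((rightsBeforeLefts (j'+1) c : ℕ) : ENNReal) ∂μ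
          + ∫⁻ c in A2, ((rightsBeforeLefts (j'+1) c : ℕ) : ENNReal) ∂μ := by
      have hst : (Set.univ : Set (ℕ → ℤ)) =ᵐ[μ] (A1 ∪ A2 : Set (ℕ → ℤ)) := by
        rw [Filter.eventuallyEq_set]
        filter_upwards [hcover] with c hc
        simp [hc]
      conv_lhs => rw [← Measure.restrict_univ (μ := μ)]
      rw [Measure.restrict_congr_set hst]
      exact lintegral_union hA2meas hdisj
    -- branch A1
    have hb1 : ∫⁻ c in A1, ((rightsBeforeLefts (j'+1) c : ℕ) : ENNReal) ∂μ
        = ENNReal.ofReal (p 1) * ENNReal.ofReal ((j' + 1 : ℝ) + driftSum M p')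
          + ENNReal.ofReal (p 1) := by
      have hae : (fun c : ℕ → ℤ => ((rightsBeforeLefts (j'+1) c : ℕ) : ENNReal))
          =ᵐ[μ.restrict A1]
          (fun c => ((rightsBeforeLefts (j'+1) (shiftk 1 c) : ℕ) : ENNReal) + 1) := by
        rw [Filter.EventuallyEq, ae_restrict_iff' hA1meas]
        filter_upwards [hinf] with c h2 hcA
        rw [rbl_right (j'+1) c h2 (by omega) ((hA1mem c).1 hcA)]
        push_cast; ring
      rw [lintegral_congr_ae hae, lintegral_add_right _ measurable_const, setLIntegral_const]
      have hμA1 : μ A1 = ENNReal.ofReal (p 1) := by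
        rw [hA1, hμ _ w1 (fun i hi => (Finset.mem_Icc.1 hi).1)
          (fun i _ => Or.inl rfl)]
        congr 1
        rw [Finset.Icc_self, Finset.prod_singleton, if_pos rfl]
        unfold qOf
        rw [if_pos (by omega)]
      have hmap : ∫⁻ c in A1, ((rightsBeforeLefts (j'+1) (shiftk 1 c) : ℕ) : ENNReal) ∂μ
          = ENNReal.ofReal (p 1) * ENNReal.ofReal ((j' + 1 : ℝ) + driftSum M p') := by
        rw [← lintegral_map (measurable_rbl_coe (j'+1)) (measurable_shiftk 1)]
        refine lintegral_scaled (qOf M p') (rightsBeforeLefts (j'+1))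
          (ENNReal.ofReal ((j' + 1 : ℝ) + driftSum M p')) (ENNReal.ofReal (p 1))
          ENNReal.ofReal_ne_top _ ?_ ?_ ?_
        · rw [shift_restrict_univ μ (qOf (M+1) p) hμ 1 le_rfl w1 (fun i _ => Or.inl rfl)]
          congr 1
          rw [Finset.Icc_self, Finset.prod_singleton, if_pos rfl]
          unfold qOf; rw [if_pos (by omega)]
        · intro F f hF hf
          rw [shift_restrict_cyl μ (qOf (M+1) p) hq01 hμ 1 le_rfl w1
            (fun i _ => Or.inl rfl) F f hF hf]
          congr 1
          · rw [Finset.Icc_self, Finset.prod_singleton, if_pos rfl]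
            unfold qOf; rw [if_pos (by omega)]
          · refine congrArg ENNReal.ofReal (Finset.prod_congr rfl (fun i hi => ?_))
            rw [qOf_shift M p i (hF i hi)]
        · intro μ' h1 h2
          have := ih p' hp' (j'+1) (by omega) μ' h1 h2
          rw [this]
          congr 1
          push_cast; ring
      rw [hmap, hμA1, one_mul]
    -- branch A2
    have hb2 : ∫⁻ c in A2, ((rightsBeforeLefts (j'+1) c : ℕ) : ENNReal) ∂μ
        = ENNReal.ofReal (1 - p 1) * ENNReal.ofReal ((j' : ℝ) + driftSum M p') := by
      have hae : (fun c : ℕ → ℤ => ((rightsBeforeLefts (j'+1) c : ℕ) : ENNReal))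
          =ᵐ[μ.restrict A2]
          (fun c => ((rightsBeforeLefts j' (shiftk 1 c) : ℕ) : ENNReal)) := by
        rw [Filter.EventuallyEq, ae_restrict_iff' hA2meas]
        filter_upwards [hinf] with c h2 hcA
        rw [rbl_left j' c h2 (by rw [(hA2mem c).1 hcA]; decide)]
      rw [lintegral_congr_ae hae]
      rw [← lintegral_map (measurable_rbl_coe j') (measurable_shiftk 1)]
      refine lintegral_scaled (qOf M p') (rightsBeforeLefts j')
        (ENNReal.ofReal ((j' : ℝ) + driftSum M p')) (ENNReal.ofReal (1 - p 1))
        ENNReal.ofReal_ne_top _ ?_ ?_ ?_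
      · rw [shift_restrict_univ μ (qOf (M+1) p) hμ 1 le_rfl w2 (fun i _ => Or.inr rfl)]
        congr 1
        rw [Finset.Icc_self, Finset.prod_singleton, if_neg (by decide)]
        unfold qOf; rw [if_pos (by omega)]
      · intro F f hF hf
        rw [shift_restrict_cyl μ (qOf (M+1) p) hq01 hμ 1 le_rfl w2
          (fun i _ => Or.inr rfl) F f hF hf]
        congr 1
        · rw [Finset.Icc_self, Finset.prod_singleton, if_neg (by decide)]
          unfold qOf; rw [if_pos (by omega)]
        · refine congrArg ENNReal.ofReal (Finset.prod_congr rfl (fun i hi => ?_))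
          rw [qOf_shift M p i (hF i hi)]
      · intro μ' h1 h2
        exact ih p' hp' j' hMj' μ' h1 h2
    rw [hsplit, hb1, hb2]
    have hMj'' : (M:ℝ) ≤ (j' : ℝ) := by exact_mod_cast hMj'
    have ha : (0:ℝ) ≤ (j' + 1 : ℝ) + driftSum M p' := by linarith [hδ.1]
    have hb : (0:ℝ) ≤ (j' : ℝ) + driftSum M p' := by linarith [hδ.1]
    rw [← ENNReal.ofReal_mul hp1.1, ← ENNReal.ofReal_mul (by linarith [hp1.2] : (0:ℝ) ≤ 1 - p 1)]
    rw [← ENNReal.ofReal_add (mul_nonneg hp1.1 ha) hp1.1]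
    rw [← ENNReal.ofReal_add (add_nonneg (mul_nonneg hp1.1 ha) hp1.1)
      (mul_nonneg (by linarith [hp1.2] : (0:ℝ) ≤ 1 - p 1) hb)]
    rw [driftSum_succ, ← hp'def]
    congr 1
    push_cast
    ring

end StmtAux


namespace StmtAux

def negc : (ℕ → ℤ) → (ℕ → ℤ) := fun c i => - c i

lemma measurable_negc : Measurable negc :=
  measurable_pi_lambda _ (fun i => measurable_from_top.comp (measurable_pi_apply i))

lemma qOf_one_sub (M : ℕ) (p : ℕ → ℝ) (i : ℕ) :
    qOf M (fun i => 1 - p i) i = 1 - qOf M p i := by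
  unfold qOf
  by_cases h : 1 ≤ i ∧ i ≤ M
  · rw [if_pos h, if_pos h]
  · rw [if_neg h, if_neg h]; norm_num

lemma driftSum_one_sub (M : ℕ) (p : ℕ → ℝ) :
    driftSum M (fun i => 1 - p i) = - driftSum M p := by
  unfold driftSum
  rw [← Finset.sum_neg_distrib]
  exact Finset.sum_congr rfl (fun i _ => by ring)

lemma lbr_eq_rbl_negc (M : ℕ) (c : ℕ → ℤ) (hpm : ∀ i, 1 ≤ i → c i = 1 ∨ c i = -1) :
    leftsBeforeRights M c = rightsBeforeLefts M (negc c) := by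
  have hcnt : ∀ t, rightsUpTo c t = leftsUpTo (negc c) t := by
    intro t
    unfold rightsUpTo leftsUpTo
    congr 1
    apply Finset.filter_congr
    intro i hi
    have h1 := (Finset.mem_Icc.1 hi).1
    rcases hpm i h1 with h | h <;>
      simp [negc, h] <;> decide
  unfold leftsBeforeRights rightsBeforeLefts
  congr 2
  ext t
  simp only [Set.mem_setOf_eq]
  rw [hcnt t]

lemma final_convert (μ : Measure (ℕ → ℤ)) (G : (ℕ → ℤ) → ℕ) (hG : Measurable G) (r : ℝ)
    (hr : 0 ≤ r) (h : ∫⁻ c, ((G c : ℕ) : ENNReal) ∂μ = ENNReal.ofReal r) :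
    ∫ c, (G c : ℝ) ∂μ = r := by
  rw [integral_eq_lintegral_of_nonneg_ae (ae_of_all _ (fun c => Nat.cast_nonneg _))
    ((measurable_from_top.comp hG : Measurable fun c => (G c : ℝ)).aestronglyMeasurable)]
  have hcast : (fun c => ENNReal.ofReal ((G c : ℝ))) = fun c => ((G c : ℕ) : ENNReal) := by
    funext c; rw [ENNReal.ofReal_natCast]
  rw [hcast, h, ENNReal.toReal_ofReal hr]

end StmtAux


open StmtAux in
/-- For independent Bernoulli variables with parameters `p_1,…,p_M`
followed by fair coins, the expected number of `1`'s before the `M`-th `0` equals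
`M + Σ_{i=1}^M (2p_i - 1)`, and symmetrically the expected number of `0`'s before the
`M`-th `1` equals `M - Σ_{i=1}^M (2p_i - 1)`. (Arrows `= 1` play the role of `1`'s.) -/
theorem expected_rights_before_M_lefts
    (M : ℕ) (p : ℕ → ℝ) (hp : ∀ i, 1 ≤ i → i ≤ M → 0 ≤ p i ∧ p i ≤ 1)
    (μc : Measure (ℕ → ℤ)) [IsProbabilityMeasure μc] (hμc : IsIIDCol μc (qOf M p)) :
    (∫ c, (rightsBeforeLefts M c : ℝ) ∂μc = M + driftSum M p) ∧
    (∫ c, (leftsBeforeRights M c : ℝ) ∂μc = M - driftSum M p) := by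
  have hIID : IIDFrom μc (qOf M p) := fun F f _ h2 => hμc F f h2
  have hδ := driftSum_bounds M p hp
  constructor
  · refine final_convert μc (rightsBeforeLefts M) (measurable_rbl M) _
      (by linarith [hδ.1]) ?_
    exact key M p hp M le_rfl μc inferInstance hIID
  · -- flip the environment
    set p' : ℕ → ℝ := fun i => 1 - p i with hp'def
    have hp' : ∀ i, 1 ≤ i → i ≤ M → 0 ≤ p' i ∧ p' i ≤ 1 := by
      intro i h1 h2
      have := hp i h1 h2
      constructor <;> [skip; skip] <;> rw [hp'def] <;> dsimp only <;> linarith [this.1, this.2]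
    set ν := μc.map negc with hν
    haveI : IsProbabilityMeasure ν := Measure.isProbabilityMeasure_map measurable_negc.aemeasurable
    have hIIDν : IIDFrom ν (qOf M p') := by
      intro F f hF hf
      rw [hν, Measure.map_apply measurable_negc (measurableSet_cyl F f)]
      have hset : negc ⁻¹' {c | ∀ i ∈ F, c i = f i} = {c | ∀ i ∈ F, c i = - f i} := by
        ext c
        simp only [Set.mem_preimage, Set.mem_setOf_eq, negc]
        constructor
        · intro h i hi; have := h i hi; omega
        · intro h i hi; have := h i hi; omega
      rw [hset, hμc F (fun i => - f i) (by
        intro i hi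
        rcases hf i hi with h | h
        · right; show - f i = -1; rw [h]
        · left; show - f i = 1; rw [h]; ring)]
      congr 1
      refine Finset.prod_congr rfl (fun i hi => ?_)
      rw [hp'def, qOf_one_sub]
      rcases hf i hi with h | h
      · rw [h, if_neg (by decide), if_pos rfl]
      · rw [h, if_pos (by decide : (-(-1:ℤ)) = 1), if_neg (by decide)]
        ring
    have hlint : ∫⁻ c, ((rightsBeforeLefts M c : ℕ) : ENNReal) ∂ν
        = ENNReal.ofReal ((M : ℝ) - driftSum M p) := by
      rw [key M p' hp' M le_rfl ν inferInstance hIIDν]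
      congr 1
      rw [hp'def]
      rw [driftSum_one_sub]
      ring
    have hpm := ae_pm hIID (qOf_bounds hp)
    have hcongr : ∫⁻ c, ((leftsBeforeRights M c : ℕ) : ENNReal) ∂μc
        = ∫⁻ c, ((rightsBeforeLefts M (negc c) : ℕ) : ENNReal) ∂μc := by
      apply lintegral_congr_ae
      filter_upwards [hpm] with c hc
      rw [lbr_eq_rbl_negc M c hc]
    refine final_convert μc (leftsBeforeRights M) (measurable_lbr M) _
      (by linarith [hδ.2]) ?_
    rw [hcongr, ← lintegral_map (measurable_rbl_coe M) measurable_negc, ← hν, hlint]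


end
end
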